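/- arXiv:2010.06496 — 8 statements merged into one kernel-verified Lean document; each statement's English description precedes it below -/
import Mathlib

section
/- For every relational vocabulary σ and every integer k ≥ 1, the triple (E_k, ε, (·)*) is a comonad in Kleisli form on the category of σ-structures and homomorphisms: for every σ-structure 𝒜 the counit ε_𝒜 : E_k 𝒜 → 𝒜 is a homomorphism; for every homomorphism f : E_k 𝒜 → ℬ the coextension f* : E_k 𝒜 → E_k ℬ is a homomorphism; and the equations (ε_𝒜)* = id_{E_k 𝒜}, ε_ℬ ∘ f* = f, and (g ∘ f*)* = g* ∘ f* hold for all homomorphisms f : E_k 𝒜 → ℬ and g : E_k ℬ → 𝒞. -/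
/-- A relational vocabulary: a type of relation symbols with arities. -/
structure RelVocab : Type 1 where
  Rel : Type
  ar : Rel → ℕ

/-- A structure for a relational vocabulary. -/
structure RelStruct (σ : RelVocab) : Type 1 where
  carrier : Type
  rel : ∀ R : σ.Rel, (Fin (σ.ar R) → carrier) → Prop

/-- Homomorphisms of relational structures. -/
def IsHom {σ : RelVocab} (𝒜 ℬ : RelStruct σ) (h : 𝒜.carrier → ℬ.carrier) : Prop :=
  ∀ (R : σ.Rel) (v : Fin (σ.ar R) → 𝒜.carrier), 𝒜.rel R v → ℬ.rel R (fun i => h (v i))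

/-- Nonempty sequences over `A` of length at most `k`: the universe of `E_k 𝒜`. -/
def EkC (k : ℕ) (A : Type) : Type :=
  {l : List A // l ≠ [] ∧ l.length ≤ k}

/-- The counit: the last element of a sequence. -/
def eps {k : ℕ} {A : Type} (s : EkC k A) : A :=
  s.1.getLast s.2.1

/-- Comparability in the prefix order. -/
def Cmp {A : Type} (s t : List A) : Prop :=
  s <+: t ∨ t <+: s

/-- The Ehrenfeucht–Fraïssé comonad `E_k` on structures. -/
def Ek {σ : RelVocab} (k : ℕ) (𝒜 : RelStruct σ) : RelStruct σ where
  carrier := EkC k 𝒜.carrier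
  rel R v := (∀ i j, Cmp (v i).1 (v j).1) ∧ 𝒜.rel R (fun i => eps (v i))

/-- The prefix of `s` of length `i+1`. -/
def prefAt {k : ℕ} {A : Type} (s : EkC k A) (i : Fin s.1.length) : EkC k A :=
  ⟨s.1.take (i + 1), by
    constructor
    · apply List.ne_nil_of_length_pos
      rw [List.length_take]
      exact lt_min (Nat.succ_pos _) (Nat.lt_of_le_of_lt (Nat.zero_le _) i.2)
    · rw [List.length_take]
      exact le_trans (min_le_right _ _) s.2.2⟩

/-- The Kleisli coextension `f* [a_1,…,a_j] = [f[a_1],…,f[a_1,…,a_j]]`. -/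
def coext {k : ℕ} {A B : Type} (f : EkC k A → B) (s : EkC k A) : EkC k B :=
  ⟨List.ofFn (fun i : Fin s.1.length => f (prefAt s i)), by
    constructor
    · apply List.ne_nil_of_length_pos
      rw [List.length_ofFn]
      exact List.length_pos_iff.mpr s.2.1
    · rw [List.length_ofFn]
      exact s.2.2⟩

/-!
Identify a sequence `s` with its chain of nonempty prefixes `s₁ <+: s₂ <+: ⋯`. The counit
reads off the last entry, and `f*` applies `f` along that chain; since the `n`-th prefix of
`f* s` is `f*` of the `n`-th prefix of `s`, all three Kleisli laws reduce to comparing entries.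
Prefix comparability is preserved by `f*` for any map `f`, so the homomorphism conditions hold.
-/

namespace EkC

variable {k : ℕ} {A B C : Type}

lemma val_prefAt (s : EkC k A) (i : Fin s.1.length) : (prefAt s i).1 = s.1.take (i + 1) := rfl

lemma prefAt_eq_of_prefix {s t : EkC k A} (h : s.1 <+: t.1) {n : ℕ} (hs : n < s.1.length)
    (ht : n < t.1.length) : prefAt t ⟨n, ht⟩ = prefAt s ⟨n, hs⟩ := by
  obtain ⟨r, hr⟩ := h
  apply Subtype.ext
  simp only [prefAt, ← hr]
  exact List.take_append_of_le_length hs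

@[simp]
lemma length_coext (f : EkC k A → B) (s : EkC k A) : (coext f s).1.length = s.1.length :=
  List.length_ofFn

lemma getElem_coext (f : EkC k A → B) (s : EkC k A) {n : ℕ} (h : n < (coext f s).1.length) :
    (coext f s).1[n] = f (prefAt s ⟨n, by simpa using h⟩) :=
  List.getElem_ofFn _

lemma eps_prefAt (s : EkC k A) (i : Fin s.1.length) : eps (prefAt s i) = s.1[i] := by
  simp [eps, prefAt, List.getLast_eq_getElem]

lemma prefAt_length_sub_one (s : EkC k A) (h : s.1.length - 1 < s.1.length) :
    prefAt s ⟨s.1.length - 1, h⟩ = s :=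
  Subtype.ext ((congrArg s.1.take (Nat.sub_add_cancel (List.length_pos_iff.2 s.2.1))).trans
    s.1.take_length)

lemma eps_coext (f : EkC k A → B) (s : EkC k A) : eps (coext f s) = f s :=
  (List.getLast_ofFn _).trans (congrArg f (prefAt_length_sub_one s _))

lemma coext_eps : coext (eps : EkC k A → A) = id := by
  funext s
  apply Subtype.ext
  simp only [coext, eps_prefAt, Fin.getElem_fin, List.ofFn_getElem, id]

lemma coext_prefix (f : EkC k A → B) {s t : EkC k A} (h : s.1 <+: t.1) :
    (coext f s).1 <+: (coext f t).1 := by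
  refine List.prefix_iff_getElem.2 ⟨by simpa using h.length_le, fun n hn => ?_⟩
  have hs : n < s.1.length := by simpa using hn
  simp only [getElem_coext]
  rw [prefAt_eq_of_prefix h hs]

lemma prefAt_coext (f : EkC k A → B) (s : EkC k A) (i : Fin s.1.length)
    (hi : (i : ℕ) < (coext f s).1.length) :
    prefAt (coext f s) ⟨i, hi⟩ = coext f (prefAt s i) := by
  apply Subtype.ext
  apply List.ext_getElem
  · simp [val_prefAt]
  · intro n hl hr
    have hn : n < s.1.length := by simp [val_prefAt] at hl; omega
    simp only [val_prefAt, List.getElem_take, getElem_coext]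
    exact congrArg f
      (prefAt_eq_of_prefix (s := prefAt s i) (t := s) (List.take_prefix _ _) _ hn)

lemma coext_coext (f : EkC k A → B) (g : EkC k B → C) :
    coext (fun s => g (coext f s)) = fun s => coext g (coext f s) := by
  funext s
  apply Subtype.ext
  apply List.ext_getElem
  · simp
  · intro n hl hr
    have hn : n < s.1.length := by simpa using hl
    simp only [getElem_coext]
    rw [prefAt_coext f s ⟨n, hn⟩]

end EkC

open EkC

lemma isHom_eps {σ : RelVocab} (k : ℕ) (𝒜 : RelStruct σ) : IsHom (Ek k 𝒜) 𝒜 eps :=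
  fun _ _ hv => hv.2

lemma isHom_coext {σ : RelVocab} {k : ℕ} {𝒜 ℬ : RelStruct σ}
    {f : EkC k 𝒜.carrier → ℬ.carrier} (hf : IsHom (Ek k 𝒜) ℬ f) :
    IsHom (Ek k 𝒜) (Ek k ℬ) (coext f) := by
  intro R v hv
  refine ⟨fun i j => (hv.1 i j).imp (coext_prefix f) (coext_prefix f), ?_⟩
  have heps : (fun i => eps (coext f (v i))) = fun i => f (v i) :=
    funext fun i => eps_coext f _
  exact heps ▸ hf R v hv

theorem stmt0_general (σ : RelVocab) (k : ℕ) :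
    (∀ 𝒜 : RelStruct σ, IsHom (Ek k 𝒜) 𝒜 eps) ∧
    (∀ (𝒜 ℬ : RelStruct σ) (f : EkC k 𝒜.carrier → ℬ.carrier),
      IsHom (Ek k 𝒜) ℬ f → IsHom (Ek k 𝒜) (Ek k ℬ) (coext f)) ∧
    (∀ 𝒜 : RelStruct σ, coext (eps : EkC k 𝒜.carrier → 𝒜.carrier) = id) ∧
    (∀ (𝒜 ℬ : RelStruct σ) (f : EkC k 𝒜.carrier → ℬ.carrier), IsHom (Ek k 𝒜) ℬ f →
      (fun s => eps (coext f s)) = f) ∧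
    (∀ (𝒜 ℬ 𝒞 : RelStruct σ) (f : EkC k 𝒜.carrier → ℬ.carrier)
      (g : EkC k ℬ.carrier → 𝒞.carrier), IsHom (Ek k 𝒜) ℬ f → IsHom (Ek k ℬ) 𝒞 g →
      coext (fun s => g (coext f s)) = fun s => coext g (coext f s)) :=
  ⟨isHom_eps k, fun _ _ _ => isHom_coext, fun _ => coext_eps,
    fun _ _ f _ => funext (eps_coext f), fun _ _ _ f g _ _ => coext_coext f g⟩

theorem stmt0 (σ : RelVocab) (k : ℕ) (hk : 1 ≤ k) :
    (∀ 𝒜 : RelStruct σ, IsHom (Ek k 𝒜) 𝒜 eps) ∧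
    (∀ (𝒜 ℬ : RelStruct σ) (f : EkC k 𝒜.carrier → ℬ.carrier),
      IsHom (Ek k 𝒜) ℬ f → IsHom (Ek k 𝒜) (Ek k ℬ) (coext f)) ∧
    (∀ 𝒜 : RelStruct σ, coext (eps : EkC k 𝒜.carrier → 𝒜.carrier) = id) ∧
    (∀ (𝒜 ℬ : RelStruct σ) (f : EkC k 𝒜.carrier → ℬ.carrier), IsHom (Ek k 𝒜) ℬ f →
      (fun s => eps (coext f s)) = f) ∧
    (∀ (𝒜 ℬ 𝒞 : RelStruct σ) (f : EkC k 𝒜.carrier → ℬ.carrier)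
      (g : EkC k ℬ.carrier → 𝒞.carrier), IsHom (Ek k 𝒜) ℬ f → IsHom (Ek k ℬ) 𝒞 g →
      coext (fun s => g (coext f s)) = fun s => coext g (coext f s)) :=
  stmt0_general σ k
end

section
/- For every relational vocabulary σ and every integer k ≥ 1, the triple (P_k, ε, (·)*) is a comonad in Kleisli form on the category of σ-structures and homomorphisms: for every σ-structure 𝒜 the counit ε_𝒜 : P_k 𝒜 → 𝒜 is a homomorphism; for every homomorphism f : P_k 𝒜 → ℬ the coextension f* : P_k 𝒜 → P_k ℬ is a homomorphism; and the equations (ε_𝒜)* = id_{P_k 𝒜}, ε_ℬ ∘ f* = f, and (g ∘ f*)* = g* ∘ f* hold for all homomorphisms f : P_k 𝒜 → ℬ and g : P_k ℬ → 𝒞. -/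
/-- Nonempty sequences of (pebble index, element) pairs: the universe of `P_k 𝒜`. -/
def PkC (k : ℕ) (A : Type) : Type :=
  {l : List (Fin k × A) // l ≠ []}

/-- The last move of a play. -/
def plast {k : ℕ} {A : Type} (s : PkC k A) : Fin k × A :=
  s.1.getLast s.2

/-- The counit: the element of the last move. -/
def peps {k : ℕ} {A : Type} (s : PkC k A) : A :=
  (plast s).2

/-- The pebbling comonad `P_k` on structures. -/
def Pk {σ : RelVocab} (k : ℕ) (𝒜 : RelStruct σ) : RelStruct σ where
  carrier := PkC k 𝒜.carrier
  rel R v :=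
    (∀ i j, Cmp (v i).1 (v j).1) ∧
    (∀ i j (u : List (Fin k × 𝒜.carrier)), (v j).1 = (v i).1 ++ u →
      (plast (v i)).1 ∉ u.map Prod.fst) ∧
    𝒜.rel R (fun i => peps (v i))

/-- The prefix of `s` of length `i+1`. -/
def pPrefAt {k : ℕ} {A : Type} (s : PkC k A) (i : Fin s.1.length) : PkC k A :=
  ⟨s.1.take (i + 1), by
    apply List.ne_nil_of_length_pos
    rw [List.length_take]
    exact lt_min (Nat.succ_pos _) (Nat.lt_of_le_of_lt (Nat.zero_le _) i.2)⟩

/-- The Kleisli coextension for the pebbling comonad. -/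
def pcoext {k : ℕ} {A B : Type} (f : PkC k A → B) (s : PkC k A) : PkC k B :=
  ⟨List.ofFn (fun i : Fin s.1.length => ((s.1.get i).1, f (pPrefAt s i))), by
    apply List.ne_nil_of_length_pos
    rw [List.length_ofFn]
    exact List.length_pos_iff.mpr s.2⟩

/-!
The `i`-th move of `f* s` keeps the pebble of the `i`-th move of `s` and records `f` on the
prefix of `s` of length `i + 1`. So `f*` preserves the sequence of pebbles and commutes with
taking prefixes; the first fact transports conditions (1) and (2) of `P_k` along `f*`, and the
second, together with the observation that the last prefix of `s` is `s` itself, reduces the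
comonad laws to pointwise identities between moves.
-/

section Pebbling

variable {k : ℕ} {A B C : Type}

lemma PkC.length_pos (s : PkC k A) : 0 < s.1.length :=
  List.length_pos_iff.mpr s.2

lemma PkC.ext_getElem {s t : PkC k A} (hl : s.1.length = t.1.length)
    (h : ∀ n (_ : n < s.1.length) (_ : n < t.1.length), s.1[n] = t.1[n]) : s = t :=
  Subtype.ext (List.ext_getElem hl h)

lemma pPrefAt_length (s : PkC k A) (i : Fin s.1.length) : (pPrefAt s i).1.length = i + 1 := by
  have := i.2
  simp only [pPrefAt, List.length_take]
  omega

lemma pPrefAt_getElem (s : PkC k A) (i : Fin s.1.length) (n : ℕ)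
    (hn : n < (pPrefAt s i).1.length) :
    (pPrefAt s i).1[n] = s.1[n]'(by have := pPrefAt_length s i; omega) :=
  List.getElem_take

lemma pPrefAt_last (s : PkC k A) :
    pPrefAt s ⟨s.1.length - 1, Nat.sub_lt s.length_pos one_pos⟩ = s :=
  Subtype.ext <| show s.1.take (s.1.length - 1 + 1) = s.1 by
    rw [Nat.sub_add_cancel s.length_pos, List.take_length]

lemma pPrefAt_pPrefAt (s : PkC k A) (i : Fin s.1.length) (n : Fin (pPrefAt s i).1.length) :
    pPrefAt (pPrefAt s i) n = pPrefAt s ⟨n, by have := pPrefAt_length s i; omega⟩ := by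
  have := n.2
  have := pPrefAt_length s i
  refine Subtype.ext ?_
  simp only [pPrefAt, List.take_take]
  congr 1
  omega

lemma peps_pPrefAt (s : PkC k A) (n : Fin s.1.length) : peps (pPrefAt s n) = s.1[n].2 := by
  simp only [peps, plast, List.getLast_eq_getElem, pPrefAt_getElem, pPrefAt_length,
    Nat.add_sub_cancel, Fin.getElem_fin]

lemma pcoext_length (f : PkC k A → B) (s : PkC k A) :
    (pcoext f s).1.length = s.1.length := by
  simp [pcoext]

lemma pcoext_getElem (f : PkC k A → B) (s : PkC k A) (n : ℕ)
    (h : n < (pcoext f s).1.length) :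
    (pcoext f s).1[n] =
      ((s.1[n]'(pcoext_length f s ▸ h)).1, f (pPrefAt s ⟨n, pcoext_length f s ▸ h⟩)) := by
  simp [pcoext, List.getElem_ofFn]

lemma pcoext_map_fst (f : PkC k A → B) (s : PkC k A) :
    (pcoext f s).1.map Prod.fst = s.1.map Prod.fst :=
  List.ext_getElem (by simp [pcoext_length]) fun n _ _ => by
    simp only [List.getElem_map, pcoext_getElem]

lemma plast_pcoext (f : PkC k A → B) (s : PkC k A) :
    plast (pcoext f s) = ((plast s).1, f s) := by
  simp only [plast, List.getLast_eq_getElem, pcoext_getElem, pcoext_length, pPrefAt_last]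

lemma peps_pcoext (f : PkC k A → B) (s : PkC k A) : peps (pcoext f s) = f s := by
  rw [peps, plast_pcoext]

lemma pcoext_pPrefAt (f : PkC k A → B) (s : PkC k A) (i : Fin s.1.length) :
    pcoext f (pPrefAt s i) = pPrefAt (pcoext f s) ⟨i, (pcoext_length f s).symm ▸ i.2⟩ := by
  refine PkC.ext_getElem (by simp only [pcoext_length, pPrefAt_length]) fun n _ _ => ?_
  simp only [pcoext_getElem, pPrefAt_getElem, pPrefAt_pPrefAt]

lemma pcoext_isPrefix (f : PkC k A → B) {s t : PkC k A} (h : s.1 <+: t.1) :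
    (pcoext f s).1 <+: (pcoext f t).1 := by
  have hs : s = pPrefAt t ⟨s.1.length - 1, by have := h.length_le; have := s.length_pos; omega⟩ :=
    Subtype.ext <| by
      simpa only [pPrefAt, Nat.sub_add_cancel s.length_pos] using List.prefix_iff_eq_take.mp h
  rw [hs, pcoext_pPrefAt]
  exact List.take_prefix _ _

lemma Cmp.pcoext (f : PkC k A → B) {s t : PkC k A} (h : Cmp s.1 t.1) :
    Cmp (pcoext f s).1 (pcoext f t).1 :=
  h.imp (pcoext_isPrefix f) (pcoext_isPrefix f)

/-- Condition (2) of `Pk` for the pair `(s, t)`. -/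
def PebbleFresh (s t : PkC k A) : Prop :=
  ∀ u, t.1 = s.1 ++ u → (plast s).1 ∉ u.map Prod.fst

lemma PebbleFresh.pcoext (f : PkC k A → B) {s t : PkC k A} (hc : Cmp s.1 t.1)
    (h : PebbleFresh s t) : PebbleFresh (pcoext f s) (pcoext f t) := by
  intro u hu
  -- only the pebble indices matter, and `pcoext` does not change them
  have hu : u.map Prod.fst = (t.1.map Prod.fst).drop s.1.length := by
    rw [← pcoext_map_fst f t, hu, List.map_append, List.drop_left' (by simp [pcoext_length])]
  rw [plast_pcoext, hu, ← List.map_drop]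
  rcases hc with hst | hts
  · exact h _ (List.prefix_iff_eq_append.mp hst).symm
  · simp [List.drop_eq_nil_of_le hts.length_le]

lemma isHom_peps {σ : RelVocab} (𝒜 : RelStruct σ) : IsHom (Pk k 𝒜) 𝒜 peps :=
  fun _ _ hv => hv.2.2

lemma isHom_pcoext {σ : RelVocab} {𝒜 ℬ : RelStruct σ} {f : PkC k 𝒜.carrier → ℬ.carrier}
    (hf : IsHom (Pk k 𝒜) ℬ f) : IsHom (Pk k 𝒜) (Pk k ℬ) (pcoext f) := by
  rintro R v hv
  obtain ⟨hc, hp, -⟩ := id hv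
  refine ⟨fun i j => (hc i j).pcoext f, fun i j => PebbleFresh.pcoext f (hc i j) (hp i j), ?_⟩
  convert hf R v hv using 2 with i
  exact peps_pcoext f (v i)

lemma pcoext_peps : pcoext (peps : PkC k A → A) = id :=
  funext fun s => PkC.ext_getElem (pcoext_length _ s) fun n _ _ => by
    simp only [pcoext_getElem, peps_pPrefAt, id, Fin.getElem_fin]

lemma pcoext_comp_pcoext (f : PkC k A → B) (g : PkC k B → C) :
    pcoext (fun s => g (pcoext f s)) = fun s => pcoext g (pcoext f s) :=
  funext fun s => PkC.ext_getElem (by simp only [pcoext_length]) fun n _ _ => by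
    simp only [pcoext_getElem, pcoext_pPrefAt]

end Pebbling

theorem stmt2_general (σ : RelVocab) (k : ℕ) :
    (∀ 𝒜 : RelStruct σ, IsHom (Pk k 𝒜) 𝒜 peps) ∧
    (∀ (𝒜 ℬ : RelStruct σ) (f : PkC k 𝒜.carrier → ℬ.carrier),
      IsHom (Pk k 𝒜) ℬ f → IsHom (Pk k 𝒜) (Pk k ℬ) (pcoext f)) ∧
    (∀ 𝒜 : RelStruct σ, pcoext (peps : PkC k 𝒜.carrier → 𝒜.carrier) = id) ∧
    (∀ (𝒜 ℬ : RelStruct σ) (f : PkC k 𝒜.carrier → ℬ.carrier), IsHom (Pk k 𝒜) ℬ f →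
      (fun s => peps (pcoext f s)) = f) ∧
    (∀ (𝒜 ℬ 𝒞 : RelStruct σ) (f : PkC k 𝒜.carrier → ℬ.carrier)
      (g : PkC k ℬ.carrier → 𝒞.carrier), IsHom (Pk k 𝒜) ℬ f → IsHom (Pk k ℬ) 𝒞 g →
      pcoext (fun s => g (pcoext f s)) = fun s => pcoext g (pcoext f s)) :=
  ⟨isHom_peps, fun _ _ _ => isHom_pcoext, fun _ => pcoext_peps,
    fun _ _ f _ => funext (peps_pcoext f), fun _ _ _ f g _ _ => pcoext_comp_pcoext f g⟩

theorem stmt2 (σ : RelVocab) (k : ℕ) (hk : 1 ≤ k) :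
    (∀ 𝒜 : RelStruct σ, IsHom (Pk k 𝒜) 𝒜 peps) ∧
    (∀ (𝒜 ℬ : RelStruct σ) (f : PkC k 𝒜.carrier → ℬ.carrier),
      IsHom (Pk k 𝒜) ℬ f → IsHom (Pk k 𝒜) (Pk k ℬ) (pcoext f)) ∧
    (∀ 𝒜 : RelStruct σ, pcoext (peps : PkC k 𝒜.carrier → 𝒜.carrier) = id) ∧
    (∀ (𝒜 ℬ : RelStruct σ) (f : PkC k 𝒜.carrier → ℬ.carrier), IsHom (Pk k 𝒜) ℬ f →
      (fun s => peps (pcoext f s)) = f) ∧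
    (∀ (𝒜 ℬ 𝒞 : RelStruct σ) (f : PkC k 𝒜.carrier → ℬ.carrier)
      (g : PkC k ℬ.carrier → 𝒞.carrier), IsHom (Pk k 𝒜) ℬ f → IsHom (Pk k ℬ) 𝒞 g →
      pcoext (fun s => g (pcoext f s)) = fun s => pcoext g (pcoext f s)) :=
  stmt2_general σ k
end

section
/- For every relational vocabulary σ with symbols of arity at most 2 and every integer k ≥ 0, the triple (M_k, ε, (·)*) is a comonad in Kleisli form on the category of pointed Kripke structures: for every pointed structure (𝒜,a) the counit ε : M_k(𝒜,a) → (𝒜,a) is a morphism of pointed structures; for every morphism f : M_k(𝒜,a) → (ℬ,b) the coextension f* : M_k(𝒜,a) → M_k(ℬ,b) is a morphism; and the equations ε* = id, ε ∘ f* = f, and (g ∘ f*)* = g* ∘ f* hold. -/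
/-- A modal vocabulary: unary symbols (propositional variables) and binary symbols
(modalities); a relational vocabulary with symbols of arity at most 2. -/
structure ModalVocab : Type 1 where
  Prp : Type
  Act : Type

/-- A Kripke structure for a modal vocabulary. -/
structure Kripke (V : ModalVocab) : Type 1 where
  carrier : Type
  unary : V.Prp → carrier → Prop
  rel : V.Act → carrier → carrier → Prop

/-- A homomorphism of Kripke structures. -/
def IsKHom {V : ModalVocab} (𝒜 ℬ : Kripke V) (h : 𝒜.carrier → ℬ.carrier) : Prop :=
  (∀ P x, 𝒜.unary P x → ℬ.unary P (h x)) ∧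
  (∀ α x y, 𝒜.rel α x y → ℬ.rel α (h x) (h y))

/-- A morphism of pointed Kripke structures. -/
def IsPKHom {V : ModalVocab} (𝒜 : Kripke V) (a : 𝒜.carrier) (ℬ : Kripke V)
    (b : ℬ.carrier) (h : 𝒜.carrier → ℬ.carrier) : Prop :=
  IsKHom 𝒜 ℬ h ∧ h a = b

/-- `chainFrom 𝒜 x l` : the list `l = [(α₁,a₁),…,(αⱼ,aⱼ)]` is a path of transitions
starting at `x`, i.e. `x →^{α₁} a₁ →^{α₂} ⋯ →^{αⱼ} aⱼ`. -/
def chainFrom {V : ModalVocab} (𝒜 : Kripke V) : 𝒜.carrier → List (V.Act × 𝒜.carrier) → Prop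
  | _, [] => True
  | x, (α, y) :: l => 𝒜.rel α x y ∧ chainFrom 𝒜 y l

/-- The last element of a path starting at `x`. -/
def lastFrom {V : ModalVocab} (𝒜 : Kripke V) : 𝒜.carrier → List (V.Act × 𝒜.carrier) → 𝒜.carrier
  | x, [] => x
  | _, (_, y) :: l => lastFrom 𝒜 y l

theorem chainFrom_take {V : ModalVocab} (𝒜 : Kripke V)
    (l : List (V.Act × 𝒜.carrier)) :
    ∀ (x : 𝒜.carrier) (n : ℕ), chainFrom 𝒜 x l → chainFrom 𝒜 x (l.take n) := by
  induction l with
  | nil => intro x n h; simpa using h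
  | cons p l ih =>
    intro x n h
    cases n with
    | zero => simp [chainFrom]
    | succ n =>
      obtain ⟨α, y⟩ := p
      exact ⟨h.1, ih y n h.2⟩

/-- The universe of `M_k (𝒜, a)`: a sequence `[a, α₁, a₁, …, αⱼ, aⱼ]` with `j ≤ k`
which is a path of transitions from `a`, represented by its list of steps. -/
def MkC {V : ModalVocab} (𝒜 : Kripke V) (a : 𝒜.carrier) (k : ℕ) : Type :=
  {l : List (V.Act × 𝒜.carrier) // l.length ≤ k ∧ chainFrom 𝒜 a l}

/-- The distinguished element `[a]` of `M_k (𝒜, a)`. -/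
def mpt {V : ModalVocab} (𝒜 : Kripke V) (a : 𝒜.carrier) (k : ℕ) : MkC 𝒜 a k :=
  ⟨[], Nat.zero_le k, trivial⟩

/-- The counit: the last element of a sequence. -/
def meps {V : ModalVocab} {𝒜 : Kripke V} {a : 𝒜.carrier} {k : ℕ} (s : MkC 𝒜 a k) :
    𝒜.carrier :=
  lastFrom 𝒜 a s.1

/-- The modal comonad: the Kripke structure `M_k (𝒜, a)`. -/
def MkS {V : ModalVocab} (𝒜 : Kripke V) (a : 𝒜.carrier) (k : ℕ) : Kripke V where
  carrier := MkC 𝒜 a k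
  unary P s := 𝒜.unary P (meps s)
  rel α s t := ∃ a', t.1 = s.1 ++ [(α, a')]

/-- The prefix of `s` of length `i+1`. -/
def mPrefAt {V : ModalVocab} {𝒜 : Kripke V} {a : 𝒜.carrier} {k : ℕ} (s : MkC 𝒜 a k)
    (i : Fin s.1.length) : MkC 𝒜 a k :=
  ⟨s.1.take (i + 1),
    le_trans (by rw [List.length_take]; exact min_le_right _ _) s.2.1,
    chainFrom_take 𝒜 s.1 a (i + 1) s.2.2⟩

/-- `F` is the Kleisli coextension of `f`, i.e. `F` is the map `f*` determined by
`f*[a] = [b]` and `f*(s[α,a']) = f*(s)[α, f(s[α,a'])]`. -/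
def IsMCoext {V : ModalVocab} {𝒜 ℬ : Kripke V} {a : 𝒜.carrier} {b : ℬ.carrier} {k : ℕ}
    (f : MkC 𝒜 a k → ℬ.carrier) (F : MkC 𝒜 a k → MkC ℬ b k) : Prop :=
  ∀ s, (F s).1 = List.ofFn (fun i : Fin s.1.length => ((s.1.get i).1, f (mPrefAt s i)))


section Stmt4Aux

variable {V : ModalVocab}

theorem lastFrom_append_single (𝒜 : Kripke V) (l : List (V.Act × 𝒜.carrier))
    (α : V.Act) (y : 𝒜.carrier) : ∀ x, lastFrom 𝒜 x (l ++ [(α, y)]) = y := by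
  induction l with
  | nil => intro x; rfl
  | cons p l ih => intro x; obtain ⟨β, z⟩ := p; exact ih z

theorem chainFrom_append_single (𝒜 : Kripke V) (l : List (V.Act × 𝒜.carrier))
    (α : V.Act) (y : 𝒜.carrier) : ∀ x, chainFrom 𝒜 x (l ++ [(α, y)]) ↔
      chainFrom 𝒜 x l ∧ 𝒜.rel α (lastFrom 𝒜 x l) y := by
  induction l with
  | nil => intro x; simp [chainFrom, lastFrom]
  | cons p l ih =>
    intro x; obtain ⟨β, z⟩ := p
    simp [chainFrom, lastFrom, ih z, and_assoc]

theorem lastFrom_take (𝒜 : Kripke V) :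
    ∀ (l : List (V.Act × 𝒜.carrier)) (x : 𝒜.carrier) (i : ℕ) (h : i < l.length),
      lastFrom 𝒜 x (l.take (i + 1)) = (l.get ⟨i, h⟩).2 := by
  intro l
  induction l with
  | nil => intro x i h; simp at h
  | cons p l ih =>
    intro x i h
    obtain ⟨β, z⟩ := p
    cases i with
    | zero => simp [lastFrom]
    | succ i => exact ih z i (by simpa using h)

/-- Reverse induction principle for elements of `MkC`. -/
theorem mkc_rev_ind {𝒜 : Kripke V} {a : 𝒜.carrier} {k : ℕ}
    (P : MkC 𝒜 a k → Prop)
    (h0 : ∀ s : MkC 𝒜 a k, s.1 = [] → P s)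
    (h1 : ∀ (t s : MkC 𝒜 a k) (α : V.Act) (a' : 𝒜.carrier),
      s.1 = t.1 ++ [(α, a')] → P t → P s) :
    ∀ s, P s := by
  suffices h : ∀ l (hl : l.length ≤ k ∧ chainFrom 𝒜 a l), P ⟨l, hl⟩ by
    rintro ⟨l, hl⟩; exact h l hl
  intro l
  induction l using List.reverseRecOn with
  | nil => intro hl; exact h0 _ rfl
  | append_singleton l p ihl =>
    intro hl
    obtain ⟨α, a'⟩ := p
    have hl' : l.length ≤ k ∧ chainFrom 𝒜 a l := by
      refine ⟨le_trans ?_ hl.1, ((chainFrom_append_single 𝒜 l α a' a).mp hl.2).1⟩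
      simp
    exact h1 ⟨l, hl'⟩ ⟨l ++ [(α, a')], hl⟩ α a' rfl (ihl hl')

/-- The underlying list of the coextension. -/
def coextL {𝒜 ℬ : Kripke V} {a : 𝒜.carrier} {k : ℕ} (f : MkC 𝒜 a k → ℬ.carrier)
    (s : MkC 𝒜 a k) : List (V.Act × ℬ.carrier) :=
  List.ofFn (fun i : Fin s.1.length => ((s.1.get i).1, f (mPrefAt s i)))

theorem coextL_nil {𝒜 ℬ : Kripke V} {a : 𝒜.carrier} {k : ℕ}
    (f : MkC 𝒜 a k → ℬ.carrier) (s : MkC 𝒜 a k) (hs : s.1 = []) :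
    coextL f s = [] :=
  List.eq_nil_of_length_eq_zero (by simp [coextL, hs])

theorem coextL_snoc {𝒜 ℬ : Kripke V} {a : 𝒜.carrier} {k : ℕ}
    (f : MkC 𝒜 a k → ℬ.carrier) (s t : MkC 𝒜 a k) (α : V.Act) (a' : 𝒜.carrier)
    (hst : s.1 = t.1 ++ [(α, a')]) :
    coextL f s = coextL f t ++ [(α, f s)] := by
  have hlen : s.1.length = t.1.length + 1 := by rw [hst]; simp
  apply List.ext_getElem
  · simp [coextL, hlen]
  · intro i h1 h2
    have hi' : i < t.1.length + 1 := by simpa [coextL, hlen] using h1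
    rcases lt_or_eq_of_le (Nat.lt_succ_iff.mp hi') with hi | hi
    · rw [List.getElem_append_left (show i < (coextL f t).length by
        simpa [coextL] using hi)]
      simp only [coextL, List.getElem_ofFn]
      have e1 : s.1.get ⟨i, by omega⟩ = t.1.get ⟨i, hi⟩ := by
        simp only [List.get_eq_getElem, hst]
        exact List.getElem_append_left hi
      have e2 : mPrefAt s ⟨i, by omega⟩ = mPrefAt t ⟨i, hi⟩ := by
        apply Subtype.ext
        show s.1.take (i + 1) = t.1.take (i + 1)
        rw [hst]
        exact List.take_append_of_le_length (by omega)
      rw [e1, e2]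
    · have hce : (coextL f t).length = i := by simp [coextL, hi]
      rw [List.getElem_append_right hce.le]
      have e3 : [(α, f s)][i - (coextL f t).length]'(by simp [hce]) = (α, f s) := by
        simp [hce]
      rw [e3]
      simp only [coextL, List.getElem_ofFn]
      have e1 : s.1.get ⟨i, by omega⟩ = (α, a') := by
        simp only [List.get_eq_getElem, hst]
        rw [List.getElem_append_right (by omega)]
        simp [hi]
      have e2 : mPrefAt s ⟨i, by omega⟩ = s := by
        apply Subtype.ext
        show s.1.take (i + 1) = s.1
        exact List.take_of_length_le (by omega)
      rw [e1, e2]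

theorem lastFrom_coextL {𝒜 ℬ : Kripke V} {a : 𝒜.carrier} {b : ℬ.carrier} {k : ℕ}
    (f : MkC 𝒜 a k → ℬ.carrier) (hb : f (mpt 𝒜 a k) = b) :
    ∀ s, lastFrom ℬ b (coextL f s) = f s := by
  apply mkc_rev_ind
  · intro s hs
    rw [coextL_nil f s hs]
    have : s = mpt 𝒜 a k := Subtype.ext hs
    rw [this, hb]; rfl
  · intro t s α a' hst _
    rw [coextL_snoc f s t α a' hst, lastFrom_append_single]

theorem chain_coextL {𝒜 ℬ : Kripke V} {a : 𝒜.carrier} {b : ℬ.carrier} {k : ℕ}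
    (f : MkC 𝒜 a k → ℬ.carrier) (hf : IsPKHom (MkS 𝒜 a k) (mpt 𝒜 a k) ℬ b f) :
    ∀ s, chainFrom ℬ b (coextL f s) := by
  apply mkc_rev_ind
  · intro s hs; rw [coextL_nil f s hs]; trivial
  · intro t s α a' hst ih
    rw [coextL_snoc f s t α a' hst]
    rw [chainFrom_append_single]
    refine ⟨ih, ?_⟩
    rw [lastFrom_coextL f hf.2]
    exact hf.1.2 α t s ⟨a', hst⟩

end Stmt4Aux

theorem stmt4 (V : ModalVocab) (k : ℕ) :
    (∀ (𝒜 : Kripke V) (a : 𝒜.carrier),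
      IsPKHom (MkS 𝒜 a k) (mpt 𝒜 a k) 𝒜 a meps) ∧
    (∀ (𝒜 : Kripke V) (a : 𝒜.carrier) (ℬ : Kripke V) (b : ℬ.carrier)
      (f : MkC 𝒜 a k → ℬ.carrier), IsPKHom (MkS 𝒜 a k) (mpt 𝒜 a k) ℬ b f →
      ∃ F : MkC 𝒜 a k → MkC ℬ b k, IsMCoext f F ∧
        IsPKHom (MkS 𝒜 a k) (mpt 𝒜 a k) (MkS ℬ b k) (mpt ℬ b k) F) ∧
    (∀ (𝒜 : Kripke V) (a : 𝒜.carrier) (F : MkC 𝒜 a k → MkC 𝒜 a k),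
      IsMCoext (meps : MkC 𝒜 a k → 𝒜.carrier) F → F = id) ∧
    (∀ (𝒜 : Kripke V) (a : 𝒜.carrier) (ℬ : Kripke V) (b : ℬ.carrier)
      (f : MkC 𝒜 a k → ℬ.carrier) (F : MkC 𝒜 a k → MkC ℬ b k),
      IsPKHom (MkS 𝒜 a k) (mpt 𝒜 a k) ℬ b f → IsMCoext f F →
      ∀ s, meps (F s) = f s) ∧
    (∀ (𝒜 : Kripke V) (a : 𝒜.carrier) (ℬ : Kripke V) (b : ℬ.carrier)
      (𝒞 : Kripke V) (c : 𝒞.carrier)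
      (f : MkC 𝒜 a k → ℬ.carrier) (g : MkC ℬ b k → 𝒞.carrier)
      (F : MkC 𝒜 a k → MkC ℬ b k) (G : MkC ℬ b k → MkC 𝒞 c k)
      (H : MkC 𝒜 a k → MkC 𝒞 c k),
      IsPKHom (MkS 𝒜 a k) (mpt 𝒜 a k) ℬ b f →
      IsPKHom (MkS ℬ b k) (mpt ℬ b k) 𝒞 c g →
      IsMCoext f F → IsMCoext g G → IsMCoext (fun s => g (F s)) H →
      H = fun s => G (F s)) := by
  refine ⟨?_, ?_, ?_, ?_, ?_⟩
  · -- counit is a morphism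
    intro 𝒜 a
    refine ⟨⟨fun P s h => h, ?_⟩, rfl⟩
    intro α s t ⟨a', ht⟩
    have hc := t.2.2
    rw [ht] at hc
    have := ((chainFrom_append_single 𝒜 s.1 α a' a).mp hc).2
    have he : meps t = a' := by
      show lastFrom 𝒜 a t.1 = a'
      rw [ht]; exact lastFrom_append_single 𝒜 s.1 α a' a
    rw [he]
    exact this
  · -- coextension exists and is a morphism
    intro 𝒜 a ℬ b f hf
    have hlen : ∀ s : MkC 𝒜 a k, (coextL f s).length ≤ k :=
      fun s => le_trans (by simp [coextL]) s.2.1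
    refine ⟨fun s => ⟨coextL f s, hlen s, chain_coextL f hf s⟩, fun s => rfl, ?_, ?_⟩
    · constructor
      · intro P s h
        show ℬ.unary P (meps (⟨coextL f s, hlen s, chain_coextL f hf s⟩ : MkC ℬ b k))
        have he : meps (⟨coextL f s, hlen s, chain_coextL f hf s⟩ : MkC ℬ b k) = f s :=
          lastFrom_coextL f hf.2 s
        rw [he]
        exact hf.1.1 P s h
      · intro α s t ⟨a', ht⟩
        exact ⟨f t, coextL_snoc f t s α a' ht⟩
    · exact Subtype.ext (coextL_nil f (mpt 𝒜 a k) rfl)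
  · -- εστ* = id
    intro 𝒜 a F hF
    funext s
    apply Subtype.ext
    rw [hF s]
    show List.ofFn _ = s.1
    have : (fun i : Fin s.1.length => ((s.1.get i).1, meps (mPrefAt s i)))
        = fun i : Fin s.1.length => s.1.get i := by
      funext i
      have : meps (mPrefAt s i) = (s.1.get i).2 :=
        lastFrom_take 𝒜 s.1 a i i.2
      rw [this]
    rw [this, List.ofFn_get]
  · -- ε ∘ f* = f
    intro 𝒜 a ℬ b f F hf hF s
    have : (F s).1 = coextL f s := hF s
    show lastFrom ℬ b (F s).1 = f s
    rw [this]
    exact lastFrom_coextL f hf.2 s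
  · -- (g ∘ f*)* = g* ∘ f*
    intro 𝒜 a ℬ b 𝒞 c f g F G H hf hg hF hG hH
    have hF' : ∀ s, (F s).1 = coextL f s := hF
    have hG' : ∀ s, (G s).1 = coextL g s := hG
    have hH' : ∀ s, (H s).1 = coextL (fun s => g (F s)) s := hH
    have key : ∀ s, (H s).1 = (G (F s)).1 := by
      apply mkc_rev_ind
      · intro s hs
        rw [hH' s, hG' (F s)]
        rw [coextL_nil _ s hs, coextL_nil g (F s) (by rw [hF' s]; exact coextL_nil f s hs)]
      · intro t s α a' hst ih
        have hFs : (F s).1 = (F t).1 ++ [(α, f s)] := by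
          rw [hF' s, hF' t]; exact coextL_snoc f s t α a' hst
        rw [hH' s, hG' (F s)]
        rw [coextL_snoc (fun s => g (F s)) s t α a' hst,
            coextL_snoc g (F s) (F t) α (f s) hFs]
        rw [← hH' t, ← hG' (F t), ih]
    funext s
    exact Subtype.ext (key s)
end

section
/- Let σ be a relational vocabulary, 𝒜 a finite σ-structure, and k ≥ 1. There is a bijective correspondence between E_k-coalgebras α : 𝒜 → E_k 𝒜 and forest covers of the Gaifman graph 𝒢(𝒜) with universe A of height at most k: each coalgebra α induces the forest cover with order a ≤ a' iff α(a) is a prefix of α(a'), and each forest cover (A,≤) of height ≤ k induces the coalgebra sending a to the covering chain of predecessors of a; these assignments are mutually inverse. -/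
/-- The adjacency relation of the Gaifman graph of `𝒜`. -/
def gaif {σ : RelVocab} (𝒜 : RelStruct σ) (a a' : 𝒜.carrier) : Prop :=
  a ≠ a' ∧ ∃ (R : σ.Rel) (v : Fin (σ.ar R) → 𝒜.carrier),
    𝒜.rel R v ∧ (∃ i, v i = a) ∧ (∃ j, v j = a')

/-- A forest cover, with universe `V`, of the graph `(V, adj)`, of height at most `k`:
a partial order on `V` whose predecessor sets are finite chains, in which adjacent
vertices are comparable, and in which every chain has at most `k` elements. -/
structure ForestCoverOn (V : Type) (adj : V → V → Prop) (k : ℕ) where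
  le : V → V → Prop
  refl : ∀ a, le a a
  antisymm : ∀ a b, le a b → le b a → a = b
  trans : ∀ a b c, le a b → le b c → le a c
  pred_finite : ∀ a, {b | le b a}.Finite
  pred_chain : ∀ a, IsChain le {b | le b a}
  cover : ∀ a a', adj a a' → le a a' ∨ le a' a
  height : ∀ C : Finset V, IsChain le ↑C → C.card ≤ k

/-- An `E_k`-coalgebra on `𝒜`: a homomorphism `α : 𝒜 → E_k 𝒜` such that, writing
`α(a) = [a_1,…,a_j]`, one has `a_j = a` and `α(a_i) = [a_1,…,a_i]` for `1 ≤ i ≤ j`. -/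
structure EkCoalgebra {σ : RelVocab} (𝒜 : RelStruct σ) (k : ℕ) where
  α : 𝒜.carrier → EkC k 𝒜.carrier
  hom : IsHom 𝒜 (Ek k 𝒜) α
  counit : ∀ a, eps (α a) = a
  comult : ∀ (a : 𝒜.carrier) (i : Fin (α a).1.length),
    (α ((α a).1.get i)).1 = (α a).1.take (i + 1)

/-!
An `E_k`-coalgebra is determined by the prefix order it induces: `b` occurs in `α a` exactly
when `α b` is a prefix of `α a`, and the comultiplication law makes `α a` list these `b` in
strictly increasing order. Conversely, in a forest cover the predecessors of `a` form a finite
chain, so they have exactly one strictly increasing enumeration `l`, and for `b = l[i]` the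
initial segment `l.take (i + 1)` is the enumeration of the predecessors of `b`. Both round trips
reduce to the uniqueness of these enumerations.
-/

section PredChain

variable {α : Type*} {r : α → α → Prop} {a a' : α} {l l' : List α}

def IsPredChain (r : α → α → Prop) (a : α) (l : List α) : Prop :=
  (∀ b, b ∈ l ↔ r b a) ∧ l.Pairwise (fun x y => r x y ∧ x ≠ y)

theorem IsPredChain.eq [Std.Antisymm r] (h : IsPredChain r a l) (h' : IsPredChain r a l') :
    l = l' :=
  List.Perm.eq_of_pairwise (fun _ _ _ _ hxy hyx => antisymm hxy.1 hyx.1) h.2 h'.2 <|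
    (List.perm_ext_iff_of_nodup (h.2.imp And.right) (h'.2.imp And.right)).2 fun b =>
      (h.1 b).trans (h'.1 b).symm

theorem IsPredChain.mem_self [Std.Refl r] (h : IsPredChain r a l) : a ∈ l :=
  (h.1 a).2 (refl a)

theorem IsPredChain.ne_nil [Std.Refl r] (h : IsPredChain r a l) : l ≠ [] :=
  List.ne_nil_of_mem h.mem_self

theorem IsPredChain.getLast_eq [Std.Refl r] [Std.Antisymm r] (h : IsPredChain r a l)
    (hne : l ≠ []) : l.getLast hne = a :=
  antisymm ((h.1 _).1 (List.getLast_mem hne)) ((h.2.imp And.left).rel_getLast h.mem_self)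

theorem IsPredChain.take [Std.Refl r] [IsTrans α r] [Std.Antisymm r] (h : IsPredChain r a l)
    (i : Fin l.length) : IsPredChain r (l.get i) (l.take (i + 1)) := by
  refine ⟨fun b => ⟨fun hb => ?_, fun hb => ?_⟩, h.2.sublist (List.take_sublist _ _)⟩
  · rw [← List.take_concat_get i.2, List.concat_eq_append, List.mem_append,
      List.mem_singleton] at hb
    rcases hb with hb | rfl
    · exact (h.2.rel_of_mem_take_of_mem_drop hb
        (List.mem_drop_iff_getElem.2 ⟨0, by simp, by simp⟩)).1
    · exact refl _
  · by_contra hb'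
    have hbl : b ∈ l := (h.1 b).2 (trans_of r hb ((h.1 _).1 (List.get_mem ..)))
    rw [← List.take_append_drop (i + 1) l, List.mem_append] at hbl
    have hib := h.2.rel_of_mem_take_of_mem_drop
      (List.mem_take_iff_getElem.2 ⟨i, by simp, rfl⟩) (hbl.resolve_left hb')
    exact hib.2 (antisymm hib.1 hb)

theorem IsPredChain.prefix_iff [Std.Refl r] [IsTrans α r] [Std.Antisymm r]
    (h : IsPredChain r a l) (h' : IsPredChain r a' l') : l <+: l' ↔ r a a' := by
  refine ⟨fun hp => (h'.1 a).1 (hp.subset h.mem_self), fun haa' => ?_⟩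
  obtain ⟨i, rfl⟩ := List.mem_iff_get.1 ((h'.1 a).2 haa')
  rw [h.eq (h'.take i)]
  exact List.take_prefix _ _

theorem exists_isPredChain [Std.Refl r] [IsTrans α r] [Std.Antisymm r]
    (hfin : {b | r b a}.Finite) (hchain : IsChain r {b | r b a}) : ∃ l, IsPredChain r a l := by
  classical
  let s := {b | r b a}
  have : Fintype s := hfin.fintype
  have : IsTrans s (fun x y => r x y) := ⟨fun _ _ _ => trans_of r⟩
  have : Std.Antisymm (fun x y : s => r x y) := ⟨fun _ _ h h' => Subtype.ext (antisymm h h')⟩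
  have : Std.Total (fun x y : s => r x y) := ⟨fun x y => hchain.total x.2 y.2⟩
  refine ⟨(Finset.univ.sort fun x y : s => r x y).map Subtype.val, fun b => ?_, ?_⟩
  · simp [s]
  · refine List.pairwise_map.2 <|
      ((Finset.univ.pairwise_sort _).and (Finset.univ.sort_nodup _)).imp fun hxy => ?_
    exact ⟨hxy.1, Subtype.coe_ne_coe.2 hxy.2⟩

end PredChain

namespace ForestCoverOn

variable {V : Type} {adj : V → V → Prop} {k : ℕ}

theorem ext {fc fd : ForestCoverOn V adj k} (h : fc.le = fd.le) : fc = fd := by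
  cases fc; cases fd; cases h; rfl

variable (fc : ForestCoverOn V adj k)

instance : Std.Refl fc.le := ⟨fc.refl⟩

instance : IsTrans V fc.le := ⟨fc.trans⟩

instance : Std.Antisymm fc.le := ⟨fc.antisymm⟩

noncomputable def predList (a : V) : List V :=
  (exists_isPredChain (fc.pred_finite a) (fc.pred_chain a)).choose

theorem isPredChain_predList (a : V) : IsPredChain fc.le a (fc.predList a) :=
  (exists_isPredChain (fc.pred_finite a) (fc.pred_chain a)).choose_spec

theorem length_predList_le (a : V) : (fc.predList a).length ≤ k := by
  classical
  have h := fc.isPredChain_predList a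
  rw [← List.toFinset_card_of_nodup (h.2.imp And.right)]
  refine fc.height _ fun x hx y hy => fc.pred_chain a ?_ ?_
  · exact (h.1 x).1 (List.mem_toFinset.1 hx)
  · exact (h.1 y).1 (List.mem_toFinset.1 hy)

theorem predList_prefix_iff {a a' : V} : fc.predList a <+: fc.predList a' ↔ fc.le a a' :=
  (fc.isPredChain_predList a).prefix_iff (fc.isPredChain_predList a')

noncomputable def predChain (a : V) : EkC k V :=
  ⟨fc.predList a, (fc.isPredChain_predList a).ne_nil, fc.length_predList_le a⟩

theorem eps_predChain (a : V) : eps (fc.predChain a) = a :=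
  (fc.isPredChain_predList a).getLast_eq _

end ForestCoverOn

namespace EkCoalgebra

variable {σ : RelVocab} {𝒜 : RelStruct σ} {k : ℕ}

theorem ext {c d : EkCoalgebra 𝒜 k} (h : c.α = d.α) : c = d := by
  cases c; cases d; cases h; rfl

variable (c : EkCoalgebra 𝒜 k)

theorem α_injective : Function.Injective c.α :=
  Function.LeftInverse.injective (g := eps) c.counit

theorem mem_α_self (a : 𝒜.carrier) : a ∈ (c.α a).1 := by
  have h : eps (c.α a) ∈ (c.α a).1 := List.getLast_mem _
  rwa [c.counit] at h

theorem mem_α_iff {a b : 𝒜.carrier} : b ∈ (c.α a).1 ↔ (c.α b).1 <+: (c.α a).1 := by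
  refine ⟨fun hb => ?_, fun hba => hba.subset (c.mem_α_self b)⟩
  obtain ⟨i, rfl⟩ := List.mem_iff_get.1 hb
  exact c.comult a i ▸ List.take_prefix _ _

theorem pairwise_α (a : 𝒜.carrier) :
    (c.α a).1.Pairwise (fun x y => (c.α x).1 <+: (c.α y).1 ∧ x ≠ y) := by
  refine List.pairwise_iff_get.2 fun i j hij => ⟨?_, fun he => hij.ne ?_⟩
  · rw [c.comult, c.comult]
    exact List.take_prefix_take_left (by omega)
  · have hlen := congrArg List.length ((c.comult a i).symm.trans (he ▸ c.comult a j))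
    simp only [List.length_take] at hlen
    omega

theorem isPredChain_α (a : 𝒜.carrier) :
    IsPredChain (fun x y => (c.α x).1 <+: (c.α y).1) a (c.α a).1 :=
  ⟨fun _ => c.mem_α_iff, c.pairwise_α a⟩

theorem card_le_of_isChain (C : Finset 𝒜.carrier)
    (hC : IsChain (fun x y => (c.α x).1 <+: (c.α y).1) ↑C) : C.card ≤ k := by
  have hlen : ∀ a, (c.α a).1.length ∈ Finset.Icc 1 k := fun a =>
    Finset.mem_Icc.2 ⟨List.length_pos_iff.2 (c.α a).2.1, (c.α a).2.2⟩
  have hinj : Set.InjOn (fun a => (c.α a).1.length) ↑C := by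
    intro x hx y hy hxy
    by_contra hne
    rcases hC hx hy hne with h | h
    · exact hne (c.α_injective (Subtype.ext (h.eq_of_length hxy)))
    · exact hne (c.α_injective (Subtype.ext (h.eq_of_length hxy.symm))).symm
  simpa using Finset.card_le_card_of_injOn _ (fun a _ => hlen a) hinj

def toForestCover : ForestCoverOn 𝒜.carrier (gaif 𝒜) k where
  le a a' := (c.α a).1 <+: (c.α a').1
  refl _ := List.prefix_refl _
  antisymm _ _ h h' := c.α_injective (Subtype.ext (h.sublist.antisymm h'.sublist))
  trans _ _ _ := List.IsPrefix.trans
  pred_finite a := (c.α a).1.finite_toSet.subset fun _ => c.mem_α_iff.2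
  pred_chain _ _ hx _ hy _ := List.prefix_or_prefix_of_prefix hx hy
  cover := by
    rintro _ _ ⟨-, R, v, hv, ⟨i, rfl⟩, ⟨j, rfl⟩⟩
    exact (c.hom R v hv).1 i j
  height := c.card_le_of_isChain

end EkCoalgebra

namespace ForestCoverOn

variable {σ : RelVocab} {𝒜 : RelStruct σ} {k : ℕ}
  (fc : ForestCoverOn 𝒜.carrier (gaif 𝒜) k)

noncomputable def toEkCoalgebra : EkCoalgebra 𝒜 k where
  α := fc.predChain
  hom R v hv := by
    refine ⟨fun i j => ?_, by simpa only [eps_predChain] using hv⟩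
    change Cmp (fc.predList (v i)) (fc.predList (v j))
    rcases eq_or_ne (v i) (v j) with hij | hij
    · rw [hij]
      exact Or.inl (List.prefix_refl _)
    · exact (fc.cover _ _ ⟨hij, R, v, hv, ⟨i, rfl⟩, ⟨j, rfl⟩⟩).imp
        fc.predList_prefix_iff.2 fc.predList_prefix_iff.2
  counit := fc.eps_predChain
  comult a i := (fc.isPredChain_predList _).eq ((fc.isPredChain_predList a).take i)

theorem toForestCover_toEkCoalgebra : fc.toEkCoalgebra.toForestCover = fc :=
  ext <| funext₂ fun _ _ => propext fc.predList_prefix_iff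

end ForestCoverOn

theorem EkCoalgebra.toEkCoalgebra_toForestCover {σ : RelVocab} {𝒜 : RelStruct σ} {k : ℕ}
    (c : EkCoalgebra 𝒜 k) : c.toForestCover.toEkCoalgebra = c :=
  ext <| funext fun a => Subtype.ext <|
    (c.toForestCover.isPredChain_predList a).eq (c.isPredChain_α a)

theorem stmt9_general (σ : RelVocab) (𝒜 : RelStruct σ) (k : ℕ) :
    ∃ (F : EkCoalgebra 𝒜 k → ForestCoverOn 𝒜.carrier (gaif 𝒜) k)
      (G : ForestCoverOn 𝒜.carrier (gaif 𝒜) k → EkCoalgebra 𝒜 k),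
      (∀ c a a', (F c).le a a' ↔ (c.α a).1 <+: (c.α a').1) ∧
      (∀ fc a, (∀ b, b ∈ ((G fc).α a).1 ↔ fc.le b a) ∧
        ((G fc).α a).1.Pairwise (fun x y => fc.le x y ∧ x ≠ y)) ∧
      (∀ c, G (F c) = c) ∧ (∀ fc, F (G fc) = fc) :=
  ⟨EkCoalgebra.toForestCover, ForestCoverOn.toEkCoalgebra, fun _ _ _ => Iff.rfl,
    fun fc a => fc.isPredChain_predList a, EkCoalgebra.toEkCoalgebra_toForestCover,
    ForestCoverOn.toForestCover_toEkCoalgebra⟩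

/-- Bijective correspondence between `E_k`-coalgebras on `𝒜` and forest covers of the
Gaifman graph of `𝒜` of height at most `k`: the coalgebra `α` induces the forest cover
`a ≤ a' iff α(a) ⊑ α(a')`; a forest cover induces the coalgebra sending `a` to the
chain of its predecessors; and these assignments are mutually inverse. -/
theorem stmt9 (σ : RelVocab) (𝒜 : RelStruct σ) (hfin : Finite 𝒜.carrier)
    (k : ℕ) (hk : 1 ≤ k) :
    ∃ (F : EkCoalgebra 𝒜 k → ForestCoverOn 𝒜.carrier (gaif 𝒜) k)
      (G : ForestCoverOn 𝒜.carrier (gaif 𝒜) k → EkCoalgebra 𝒜 k),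
      (∀ c a a', (F c).le a a' ↔ (c.α a).1 <+: (c.α a').1) ∧
      (∀ fc a, (∀ b, b ∈ ((G fc).α a).1 ↔ fc.le b a) ∧
        ((G fc).α a).1.Pairwise (fun x y => fc.le x y ∧ x ≠ y)) ∧
      (∀ c, G (F c) = c) ∧ (∀ fc, F (G fc) = fc) :=
  stmt9_general σ 𝒜 k
end

section
/- Let G = (V, ⌢) be a finite graph and k ≥ 1. The following are equivalent: (1) G has a tree decomposition of width < k; (2) G has a k-pebble forest cover. -/
/-!
Given a tree decomposition, the nodes whose bags contain a vertex `v` form a subtree; call its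
least node the root of `v`. Ordering the vertices by their roots, with ties broken arbitrarily,
gives a forest order in which adjacent vertices are comparable, and if `v ⌢ v'` and
`v < w ≤ v'` then `v` lies in the bag at the root of `w`. Pebbling greedily along this order, so
that `w` avoids the pebbles of the fewer than `k` earlier vertices in that bag, gives a `k`-pebble
forest cover.

Conversely, given a `k`-pebble forest cover, add a root below the forest and let the bag of `a`
consist of the `w ≤ a` whose pebble is not reused on `(w, a]`. As `Iic a` is a chain, pebbles are
distinct on a bag, so it has at most `k` elements. The pebbling condition says precisely that
every edge lies in a bag, and membership of `w` in the bag of `a` passes to the bag of every `y`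
with `w ≤ y ≤ a`, which gives (TD3).
-/

/-- A tree decomposition of the graph `(V, adj)`: a tree order `(T, le)` (a partial
order with predecessor sets finite chains and a least element), which therefore has
binary meets, together with a labelling `lam : T → Set V` satisfying (TD1)–(TD3). -/
structure TreeDecomp (V : Type) (adj : V → V → Prop) where
  T : Type
  le : T → T → Prop
  refl : ∀ x, le x x
  antisymm : ∀ x y, le x y → le y x → x = y
  trans : ∀ x y z, le x y → le y z → le x z
  pred_finite : ∀ x, {y | le y x}.Finite
  pred_chain : ∀ x, IsChain le {y | le y x}
  bot : T
  bot_le : ∀ x, le bot x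
  meet : T → T → T
  meet_le_left : ∀ x y, le (meet x y) x
  meet_le_right : ∀ x y, le (meet x y) y
  le_meet : ∀ x y z, le z x → le z y → le z (meet x y)
  lam : T → Set V
  td1 : ∀ v, ∃ x, v ∈ lam x
  td2 : ∀ v v', adj v v' → ∃ x, v ∈ lam x ∧ v' ∈ lam x
  td3 : ∀ v x x' y, v ∈ lam x → v ∈ lam x' →
    ((le (meet x x') y ∧ le y x) ∨ (le (meet x x') y ∧ le y x')) → v ∈ lam y

/-- A `k`-pebble forest cover of the graph `(V, adj)`: a forest order on `V` in which
adjacent vertices are comparable, together with a pebbling function `p : V → {1,…,k}`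
such that if `v ⌢ v'` and `v ≤ v'`, then `p(v) ≠ p(w)` for all `w` with `v < w ≤ v'`. -/
structure PebbleForestCover (V : Type) (adj : V → V → Prop) (k : ℕ) where
  le : V → V → Prop
  refl : ∀ a, le a a
  antisymm : ∀ a b, le a b → le b a → a = b
  trans : ∀ a b c, le a b → le b c → le a c
  pred_finite : ∀ a, {b | le b a}.Finite
  pred_chain : ∀ a, IsChain le {b | le b a}
  cover : ∀ a a', adj a a' → le a a' ∨ le a' a
  peb : V → Fin k
  peb_cond : ∀ v v' w, adj v v' → le v v' → le v w → v ≠ w → le w v' → peb v ≠ peb w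

open Set

section Order

variable {α : Type*}

theorem wellFoundedLT_of_finite_Iic [Preorder α] (h : ∀ a : α, (Iic a).Finite) :
    WellFoundedLT α :=
  StrictMono.wellFoundedLT (f := fun a => (Iic a).ncard) fun _ _ hab =>
    ncard_lt_ncard (Iic_ssubset_Iic.2 hab) (h _)

theorem IsChain.exists_isGreatest_of_finite [PartialOrder α] {s : Set α}
    (hc : IsChain (· ≤ ·) s) (hs : s.Finite) (hne : s.Nonempty) : ∃ m, IsGreatest s m := by
  obtain ⟨m, hm⟩ := hs.exists_maximal hne
  refine ⟨m, hm.prop, fun b hb => ?_⟩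
  rcases hc.total hb hm.prop with hbm | hmb
  · exact hbm
  · exact hm.le_of_ge hb hmb

theorem exists_isGLB_pair_of_finite_Iic [PartialOrder α] {a b : α} (hfin : (Iic a).Finite)
    (hchain : IsChain (· ≤ ·) (Iic a)) (hne : (lowerBounds {a, b}).Nonempty) :
    ∃ m, IsGLB {a, b} m := by
  have hsub : lowerBounds {a, b} ⊆ Iic a := fun c hc => hc (mem_insert a {b})
  exact (hchain.mono hsub).exists_isGreatest_of_finite (hfin.subset hsub) hne

theorem WithBot.finite_Iic [PartialOrder α] (h : ∀ a : α, (Iic a).Finite) (x : WithBot α) :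
    (Iic x).Finite := by
  induction x using WithBot.recBotCoe with
  | bot => simp
  | coe a => simpa [WithBot.Iic_coe] using (h a).image _

theorem WithBot.isChain_Iic [PartialOrder α] (h : ∀ a : α, IsChain (· ≤ ·) (Iic a))
    (x : WithBot α) : IsChain (· ≤ ·) (Iic x) := by
  induction x using WithBot.recBotCoe with
  | bot => simp
  | coe a =>
    rw [WithBot.Iic_coe, union_singleton]
    exact (WithBot.coe_mono.isChain_image (h a)).insert fun _ _ _ => .inl bot_le

theorem exists_fin_coloring_of_encard_lt [Preorder α] [WellFoundedLT α] {k : ℕ}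
    (S : α → Set α) (hS : ∀ a, S a ⊆ Iio a) (hcard : ∀ a, (S a).encard < k) :
    ∃ c : α → Fin k, ∀ a, ∀ b ∈ S a, c b ≠ c a := by
  have hfree : ∀ a (f : S a → Fin k), ∃ i, i ∉ range f := by
    intro a f
    by_contra! h
    have hle : (range f).encard ≤ (S a).encard := by
      rw [← image_univ]
      simpa using encard_image_le f univ
    rw [eq_univ_of_forall h, encard_univ, ENat.card_eq_coe_fintype_card, Fintype.card_fin] at hle
    exact (hle.trans_lt (hcard a)).false
  let c : α → Fin k := WellFoundedLT.fix fun a ih => (hfree a fun b => ih b (hS a b.2)).choose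
  have hc : ∀ a, c a = (hfree a fun b => c b).choose := WellFoundedLT.fix_eq _
  refine ⟨c, fun a b hb hba => ?_⟩
  exact (hfree a fun b => c b).choose_spec ⟨⟨b, hb⟩, hba.trans (hc a)⟩

end Order

section PebbleBag

variable {V β : Type*} [PartialOrder V]

def pebbleBag (p : V → β) (x : WithBot V) : Set V :=
  {w | (w : WithBot V) ≤ x ∧ ∀ u : V, w < u → (u : WithBot V) ≤ x → p w ≠ p u}

theorem self_mem_pebbleBag (p : V → β) (a : V) : a ∈ pebbleBag p a :=
  ⟨le_rfl, fun _ hau hua _ => (WithBot.coe_le_coe.1 hua).not_gt hau⟩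

theorem mem_pebbleBag_of_le {p : V → β} {v : V} {x y : WithBot V} (hv : v ∈ pebbleBag p x)
    (hvy : (v : WithBot V) ≤ y) (hyx : y ≤ x) : v ∈ pebbleBag p y :=
  ⟨hvy, fun u hvu huy => hv.2 u hvu (huy.trans hyx)⟩

theorem injOn_pebbleBag (p : V → β) {x : WithBot V} (hx : IsChain (· ≤ ·) (Iic x)) :
    InjOn p (pebbleBag p x) := by
  intro w hw w' hw' hp
  by_contra hne
  rcases hx.total hw.1 hw'.1 with h | h
  · exact hw.2 w' ((WithBot.coe_le_coe.1 h).lt_of_ne hne) hw'.1 hp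
  · exact hw'.2 w ((WithBot.coe_le_coe.1 h).lt_of_ne (Ne.symm hne)) hw.1 hp.symm

theorem encard_pebbleBag_le {k : ℕ} (p : V → Fin k) {x : WithBot V}
    (hx : IsChain (· ≤ ·) (Iic x)) : (pebbleBag p x).encard ≤ k := by
  simpa using encard_le_encard_of_injOn (mapsTo_univ p _) (injOn_pebbleBag p hx)

end PebbleBag

namespace PebbleForestCover

variable {V : Type} {adj : V → V → Prop} {k : ℕ}

abbrev toPartialOrder (C : PebbleForestCover V adj k) : PartialOrder V where
  le := C.le
  le_refl := C.refl
  le_trans := C.trans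
  le_antisymm := C.antisymm

theorem exists_treeDecomp (C : PebbleForestCover V adj k) (hsym : ∀ a b, adj a b → adj b a) :
    ∃ D : TreeDecomp V adj, ∀ x, (D.lam x).encard ≤ k := by
  let _ := C.toPartialOrder
  have hfin : ∀ x : WithBot V, (Iic x).Finite := WithBot.finite_Iic C.pred_finite
  have hchain : ∀ x : WithBot V, IsChain (· ≤ ·) (Iic x) := WithBot.isChain_Iic C.pred_chain
  have hglb : ∀ x y : WithBot V, ∃ m, IsGLB {x, y} m := fun x y =>
    exists_isGLB_pair_of_finite_Iic (hfin x) (hchain x) ⟨⊥, by simp [lowerBounds]⟩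
  have le_glb : ∀ {x y z : WithBot V}, z ≤ x → z ≤ y → z ≤ (hglb x y).choose :=
    fun hzx hzy => (hglb _ _).choose_spec.2 (by simp [lowerBounds, hzx, hzy])
  have hedge : ∀ v w, adj v w → v ≤ w → ∃ x, v ∈ pebbleBag C.peb x ∧ w ∈ pebbleBag C.peb x :=
    fun v w h hvw => ⟨w, ⟨WithBot.coe_le_coe.2 hvw, fun u hvu huw =>
      C.peb_cond v w u h hvw hvu.le hvu.ne (WithBot.coe_le_coe.1 huw)⟩, self_mem_pebbleBag _ w⟩
  refine ⟨{
    T := WithBot V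
    le := (· ≤ ·)
    refl := le_refl
    antisymm := fun _ _ => le_antisymm
    trans := fun _ _ _ => le_trans
    pred_finite := hfin
    pred_chain := hchain
    bot := ⊥
    bot_le := fun _ => bot_le
    meet := fun x y => (hglb x y).choose
    meet_le_left := fun x y => (hglb x y).choose_spec.1 (mem_insert x _)
    meet_le_right := fun x y => (hglb x y).choose_spec.1 (mem_insert_of_mem x rfl)
    le_meet := fun _ _ _ => le_glb
    lam := pebbleBag C.peb
    td1 := fun v => ⟨v, self_mem_pebbleBag _ v⟩
    td2 := fun v w h => (C.cover v w h).elim (hedge v w h)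
      fun hwv => (hedge w v (hsym v w h) hwv).imp fun _ => And.symm
    td3 := ?_ }, fun x => encard_pebbleBag_le C.peb (hchain x)⟩
  rintro v x x' y hx hx' (⟨hmy, hyx⟩ | ⟨hmy, hyx'⟩)
  · exact mem_pebbleBag_of_le hx ((le_glb hx.1 hx'.1).trans hmy) hyx
  · exact mem_pebbleBag_of_le hx' ((le_glb hx.1 hx'.1).trans hmy) hyx'

end PebbleForestCover

namespace TreeDecomp

variable {V : Type} {adj : V → V → Prop} (D : TreeDecomp V adj)

instance : PartialOrder D.T where
  le := D.le
  le_refl := D.refl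
  le_trans := D.trans
  le_antisymm := D.antisymm

theorem finite_Iic (x : D.T) : (Iic x).Finite := D.pred_finite x

theorem isChain_Iic (x : D.T) : IsChain (· ≤ ·) (Iic x) := D.pred_chain x

instance : WellFoundedLT D.T := wellFoundedLT_of_finite_Iic D.finite_Iic

theorem exists_isLeast_mem_lam (v : V) : ∃ m, IsLeast {x | v ∈ D.lam x} m := by
  obtain ⟨m, hm, hmin⟩ := wellFounded_lt.has_min _ (D.td1 v)
  refine ⟨m, hm, fun x hx => ?_⟩
  have hmeet : v ∈ D.lam (D.meet m x) :=
    D.td3 v m x _ hm hx (.inl ⟨D.refl _, D.meet_le_left m x⟩)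
  have : D.meet m x = m := eq_of_le_of_not_lt (D.meet_le_left m x) (hmin _ hmeet)
  exact this ▸ D.meet_le_right m x

noncomputable def rootOf (v : V) : D.T := (D.exists_isLeast_mem_lam v).choose

theorem isLeast_rootOf (v : V) : IsLeast {x | v ∈ D.lam x} (D.rootOf v) :=
  (D.exists_isLeast_mem_lam v).choose_spec

theorem mem_lam_of_rootOf_le_of_le {v : V} {x y : D.T} (hx : v ∈ D.lam x)
    (hy : D.rootOf v ≤ y) (hyx : y ≤ x) : v ∈ D.lam y :=
  D.td3 v _ x y (D.isLeast_rootOf v).1 hx (.inr ⟨le_trans (D.meet_le_left _ _) hy, hyx⟩)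

/-- The vertices, ordered by their roots, with ties broken by an arbitrary well-order. -/
def Vertex (_ : TreeDecomp V adj) : Type := V

noncomputable instance : PartialOrder D.Vertex :=
  PartialOrder.lift (fun v : V => toLex (D.rootOf v, embeddingToCardinal v))
    fun _ _ h => embeddingToCardinal.injective (Prod.ext_iff.1 h).2

theorem vertex_le_iff {v w : D.Vertex} : v ≤ w ↔ D.rootOf v < D.rootOf w ∨
    D.rootOf v = D.rootOf w ∧ embeddingToCardinal v ≤ embeddingToCardinal w :=
  Prod.Lex.le_iff

theorem rootOf_mono {v w : D.Vertex} (h : v ≤ w) : D.rootOf v ≤ D.rootOf w :=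
  (D.vertex_le_iff.1 h).elim le_of_lt fun h => h.1.le

theorem le_or_le_of_rootOf {v w : D.Vertex}
    (h : D.rootOf v ≤ D.rootOf w ∨ D.rootOf w ≤ D.rootOf v) : v ≤ w ∨ w ≤ v := by
  simp only [vertex_le_iff]
  rcases eq_or_ne (D.rootOf v) (D.rootOf w) with heq | hne
  · rcases le_total (embeddingToCardinal v) (embeddingToCardinal w) with h' | h'
    · exact .inl (.inr ⟨heq, h'⟩)
    · exact .inr (.inr ⟨heq.symm, h'⟩)
  · rcases h with h | h
    · exact .inl (.inl (h.lt_of_ne hne))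
    · exact .inr (.inl (h.lt_of_ne hne.symm))

theorem Iic_vertex_subset_biUnion_lam (w : D.Vertex) :
    Iic w ⊆ ⋃ x ∈ Iic (D.rootOf w), D.lam x :=
  fun v hv => mem_biUnion (D.rootOf_mono hv) (D.isLeast_rootOf v).1

theorem isChain_Iic_vertex (w : D.Vertex) : IsChain (· ≤ ·) (Iic w) :=
  fun _ hv _ hv' _ =>
    D.le_or_le_of_rootOf ((D.isChain_Iic _).total (D.rootOf_mono hv) (D.rootOf_mono hv'))

theorem le_or_le_of_adj {v w : D.Vertex} (h : adj v w) : v ≤ w ∨ w ≤ v := by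
  obtain ⟨x, hv, hw⟩ := D.td2 v w h
  exact D.le_or_le_of_rootOf
    ((D.isChain_Iic x).total ((D.isLeast_rootOf v).2 hv) ((D.isLeast_rootOf w).2 hw))

theorem mem_lam_rootOf_of_adj {v v' w : D.Vertex} (h : adj v v') (hvw : v ≤ w) (hwv' : w ≤ v') :
    v ∈ D.lam (D.rootOf w) := by
  obtain ⟨x, hv, hv'⟩ := D.td2 v v' h
  exact D.mem_lam_of_rootOf_le_of_le hv (D.rootOf_mono hvw)
    ((D.rootOf_mono hwv').trans ((D.isLeast_rootOf v').2 hv'))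

theorem nonempty_pebbleForestCover {k : ℕ} (hbag : ∀ x, (D.lam x).encard ≤ k) :
    Nonempty (PebbleForestCover V adj k) := by
  have hfin : ∀ x, (D.lam x).Finite := fun x => finite_of_encard_le_coe (hbag x)
  have hIic : ∀ w : D.Vertex, (Iic w).Finite := fun w =>
    ((D.finite_Iic _).biUnion fun x _ => hfin x).subset (D.Iic_vertex_subset_biUnion_lam w)
  have := wellFoundedLT_of_finite_Iic hIic
  obtain ⟨p, hp⟩ := exists_fin_coloring_of_encard_lt
    (fun w : D.Vertex => {v | v < w ∧ v ∈ D.lam (D.rootOf w)}) (fun _ _ hv => hv.1) fun w =>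
      calc _ < (D.lam (D.rootOf w)).encard :=
            ((hfin _).subset fun _ hv => hv.2).encard_lt_encard
              ⟨fun _ hv => hv.2, fun h => (h (D.isLeast_rootOf w).1).1.false⟩
        _ ≤ k := hbag _
  exact ⟨{
    le := (· ≤ · : D.Vertex → D.Vertex → Prop)
    refl := le_refl (α := D.Vertex)
    antisymm := fun _ _ => le_antisymm (α := D.Vertex)
    trans := fun _ _ _ => le_trans (α := D.Vertex)
    pred_finite := hIic
    pred_chain := D.isChain_Iic_vertex
    cover := fun _ _ => D.le_or_le_of_adj
    peb := p
    peb_cond := fun v v' w h _ hvw hne hwv' =>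
      hp w v ⟨hvw.lt_of_ne hne, D.mem_lam_rootOf_of_adj h hvw hwv'⟩ }⟩

end TreeDecomp

theorem stmt11_general (V : Type) (adj : V → V → Prop)
    (hsym : ∀ a b, adj a b → adj b a) (k : ℕ) :
    (∃ D : TreeDecomp V adj, ∀ x, (D.lam x).Finite ∧ (D.lam x).ncard ≤ k) ↔
    Nonempty (PebbleForestCover V adj k) := by
  simp_rw [← encard_le_coe_iff_finite_ncard_le]
  constructor
  · rintro ⟨D, hD⟩
    exact D.nonempty_pebbleForestCover hD
  · rintro ⟨C⟩
    exact C.exists_treeDecomp hsym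

/-- A finite graph has a tree decomposition of width `< k` iff it has a `k`-pebble
forest cover. -/
theorem stmt11 (V : Type) (adj : V → V → Prop)
    (hsym : ∀ a b, adj a b → adj b a) (hirr : ∀ a, ¬ adj a a)
    (hfin : Finite V) (k : ℕ) (hk : 1 ≤ k) :
    (∃ D : TreeDecomp V adj, ∀ x, (D.lam x).Finite ∧ (D.lam x).ncard ≤ k) ↔
    Nonempty (PebbleForestCover V adj k) :=
  stmt11_general V adj hsym k
end

section
/- Let σ be a relational vocabulary, 𝒜 a finite σ-structure, and k ≥ 1. There is a bijective correspondence between P_k-coalgebras α : 𝒜 → P_k 𝒜 and k-pebble forest covers of the Gaifman graph 𝒢(𝒜) with universe A. -/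
/-- A `P_k`-coalgebra on `𝒜`: a homomorphism `α : 𝒜 → P_k 𝒜` such that, writing
`α(a) = [(p_1,a_1),…,(p_j,a_j)]`, one has `a_j = a` and
`α(a_i) = [(p_1,a_1),…,(p_i,a_i)]` for `1 ≤ i ≤ j`. -/
structure PkCoalgebra {σ : RelVocab} (𝒜 : RelStruct σ) (k : ℕ) where
  α : 𝒜.carrier → PkC k 𝒜.carrier
  hom : IsHom 𝒜 (Pk k 𝒜) α
  counit : ∀ a, peps (α a) = a
  comult : ∀ (a : 𝒜.carrier) (i : Fin (α a).1.length),
    (α ((α a).1.get i).2).1 = (α a).1.take (i + 1)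

/-!
A coalgebra `α` is determined by the tree of its plays: `a ≤ b` iff `α a` is a prefix of `α b`,
and the pebble of `a` is the pebble of the last move of `α a`. The comultiplication law says that
the prefixes of `α a` are exactly the plays `α b` of the elements `b ≤ a`, so `α a` lists the
predecessors of `a` in increasing order, each with its pebble. Conversely a forest cover gives
back the coalgebra sending `a` to its chain of predecessors, pebbled. Under this dictionary the
homomorphism condition for `α` is precisely the covering and pebbling condition of the forest
cover, and the two constructions are mutually inverse.
-/

theorem List.getLast_mem_of_prefix_of_prefix {α : Type*} {l₁ l₂ u : List α} (h₁₂ : l₁ <+: l₂)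
    (hlen : l₁.length < l₂.length) (h₂ : l₂ <+: l₁ ++ u) (hne : l₂ ≠ []) :
    l₂.getLast hne ∈ u := by
  obtain ⟨u₁, rfl⟩ := h₁₂
  have hu₁ : u₁ ≠ [] := by rintro rfl; simp at hlen
  obtain ⟨u₂, hu⟩ := h₂
  rw [List.append_assoc, List.append_cancel_left_eq] at hu
  rw [List.getLast_append_of_ne_nil hne hu₁, ← hu]
  exact List.mem_append_left _ (List.getLast_mem hu₁)

namespace PebbleForestCover

variable {V : Type} {adj : V → V → Prop} {k : ℕ} (F : PebbleForestCover V adj k)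

theorem ext {F₁ F₂ : PebbleForestCover V adj k} (hle : F₁.le = F₂.le) (hpeb : F₁.peb = F₂.peb) :
    F₁ = F₂ := by
  cases F₁; cases F₂; cases hle; cases hpeb; rfl

noncomputable def rank (a : V) : ℕ := {b | F.le b a}.ncard

theorem rank_lt_rank {a b : V} (hab : F.le a b) (hne : a ≠ b) : F.rank a < F.rank b :=
  Set.ncard_lt_ncard ⟨fun c hc => F.trans c a b hc hab,
    fun h => hne (F.antisymm a b hab (h (F.refl b)))⟩ (F.pred_finite b)

def IsPredChain (a : V) (l : List V) : Prop :=
  l.Nodup ∧ l.Pairwise F.le ∧ ∀ x, x ∈ l ↔ F.le x a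

variable {F}

theorem IsPredChain.eq {a : V} {l₁ l₂ : List V} (h₁ : F.IsPredChain a l₁)
    (h₂ : F.IsPredChain a l₂) : l₁ = l₂ :=
  have : Std.Antisymm F.le := ⟨F.antisymm⟩
  List.Perm.eq_of_pairwise' h₁.2.1 h₂.2.1
    ((List.perm_ext_iff_of_nodup h₁.1 h₂.1).2 fun x => (h₁.2.2 x).trans (h₂.2.2 x).symm)

theorem IsPredChain.take {a : V} {l : List V} (h : F.IsPredChain a l) (i : ℕ)
    (hi : i < l.length) : F.IsPredChain l[i] (l.take (i + 1)) := by
  obtain ⟨hnodup, hsorted, hmem⟩ := h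
  refine ⟨hnodup.sublist (List.take_sublist _ _), hsorted.sublist (List.take_sublist _ _),
    fun x => ⟨fun hx => ?_, fun hx => ?_⟩⟩
  · obtain ⟨j, hj, rfl⟩ := List.getElem_of_mem hx
    rw [List.length_take] at hj
    rw [List.getElem_take]
    rcases Nat.lt_or_eq_of_le (Nat.le_of_lt_succ (lt_of_lt_of_le hj (min_le_left _ _))) with
      hji | rfl
    · exact List.pairwise_iff_getElem.1 hsorted j i (by omega) hi hji
    · exact F.refl _
  · obtain ⟨j, hj, rfl⟩ := List.getElem_of_mem
      ((hmem _).2 (F.trans _ _ _ hx ((hmem _).1 (List.getElem_mem hi))))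
    rcases Nat.lt_or_ge i j with hij | hji
    · have := F.antisymm _ _ hx (List.pairwise_iff_getElem.1 hsorted i j hi hj hij)
      exact absurd ((hnodup.getElem_inj_iff).1 this) (by omega)
    · exact List.mem_iff_getElem.2 ⟨j, by simp; omega, List.getElem_take⟩

variable (F)

theorem exists_isPredChain (a : V) : ∃ l, F.IsPredChain a l := by
  classical
  -- `F.le` is not total, but on the chain of predecessors of `a` it agrees with comparing ranks.
  let preds := (F.pred_finite a).toFinset.toList
  have hperm := List.mergeSort_perm preds (fun x y => F.rank x ≤ F.rank y)
  refine ⟨_, hperm.nodup_iff.2 (Finset.nodup_toList _), ?_, fun x => by simp [hperm.mem_iff, preds]⟩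
  refine (List.pairwise_mergeSort (fun x y z hxy hyz => by simp_all; omega)
    (fun x y => by simp; omega) preds).imp_of_mem fun {x y} hx hy hxy => ?_
  simp only [hperm.mem_iff, preds, Finset.mem_toList, Set.Finite.mem_toFinset,
    Set.mem_ofPred_eq] at hx hy
  rcases eq_or_ne x y with rfl | hne
  · exact F.refl x
  rcases F.pred_chain a hx hy hne with h | h
  · exact h
  · exact absurd (F.rank_lt_rank h hne.symm) (by simpa using hxy)

noncomputable def predChain (a : V) : List V := (F.exists_isPredChain a).choose

theorem isPredChain_predChain (a : V) : F.IsPredChain a (F.predChain a) :=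
  (F.exists_isPredChain a).choose_spec

theorem mem_predChain {a x : V} : x ∈ F.predChain a ↔ F.le x a :=
  (F.isPredChain_predChain a).2.2 x

theorem predChain_ne_nil (a : V) : F.predChain a ≠ [] :=
  List.ne_nil_of_mem (F.mem_predChain.2 (F.refl a))

theorem predChain_getElem (a : V) (i : ℕ) (hi : i < (F.predChain a).length) :
    F.predChain (F.predChain a)[i] = (F.predChain a).take (i + 1) :=
  (F.isPredChain_predChain _).eq ((F.isPredChain_predChain a).take i hi)

theorem getLast_predChain (a : V) : (F.predChain a).getLast (F.predChain_ne_nil a) = a := by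
  obtain ⟨i, hi, hia⟩ := List.getElem_of_mem (F.mem_predChain.2 (F.refl a))
  have htake := F.predChain_getElem a i hi
  rw [hia, eq_comm, List.take_eq_self_iff] at htake
  rw [List.getLast_eq_getElem]
  convert hia using 2
  omega

theorem predChain_prefix_iff {a b : V} : F.predChain a <+: F.predChain b ↔ F.le a b := by
  refine ⟨fun h => F.mem_predChain.1 (h.subset (F.mem_predChain.2 (F.refl a))), fun h => ?_⟩
  obtain ⟨i, hi, rfl⟩ := List.getElem_of_mem (F.mem_predChain.2 h)
  rw [predChain_getElem]
  exact List.take_prefix _ _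

noncomputable def play (a : V) : List (Fin k × V) := (F.predChain a).map fun x => (F.peb x, x)

theorem play_prefix_iff {a b : V} : F.play a <+: F.play b ↔ F.le a b :=
  (List.prefix_map_iff_of_injective fun _ _ h => congrArg Prod.snd h).trans F.predChain_prefix_iff

theorem getLast_play (a : V) (h : F.play a ≠ []) : (F.play a).getLast h = (F.peb a, a) := by
  simp only [play, List.getLast_map, getLast_predChain]

theorem mem_play_self (a : V) : (F.peb a, a) ∈ F.play a :=
  List.mem_map_of_mem (F.mem_predChain.2 (F.refl a))

theorem play_ne_nil (a : V) : F.play a ≠ [] :=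
  List.ne_nil_of_mem (F.mem_play_self a)

theorem fst_eq_peb_snd_of_mem_play {a : V} {p : Fin k × V} (hp : p ∈ F.play a) :
    p.1 = F.peb p.2 := by
  obtain ⟨x, -, rfl⟩ := List.mem_map.1 hp
  rfl

theorem le_of_mem_play {a : V} {p : Fin k × V} (hp : p ∈ F.play a) : F.le p.2 a := by
  obtain ⟨x, hx, rfl⟩ := List.mem_map.1 hp
  exact F.mem_predChain.1 hx

theorem pairwise_play (a : V) : (F.play a).Pairwise fun p q => F.le p.2 q.2 ∧ p.2 ≠ q.2 :=
  List.pairwise_map.2 ((F.isPredChain_predChain a).2.1.and (F.isPredChain_predChain a).1)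

theorem peb_not_mem_of_play_eq_append {a b : V} {u : List (Fin k × V)} (hadj : adj a b)
    (h : F.play b = F.play a ++ u) : F.peb a ∉ u.map Prod.fst := by
  rintro hmem
  obtain ⟨p, hp, hpa⟩ := List.mem_map.1 hmem
  have hpb : p ∈ F.play b := h ▸ List.mem_append_right _ hp
  have hab : F.le a b := F.play_prefix_iff.1 ⟨u, h.symm⟩
  have hap := (List.pairwise_append.1 (h ▸ F.pairwise_play b)).2.2 _ (F.mem_play_self a) p hp
  exact F.peb_cond a b p.2 hadj hab hap.1 hap.2 (F.le_of_mem_play hpb)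
    (hpa.symm.trans (F.fst_eq_peb_snd_of_mem_play hpb))

end PebbleForestCover

section Gaifman

variable {σ : RelVocab} {𝒜 : RelStruct σ} {k : ℕ}

theorem PkCoalgebra.ext {C₁ C₂ : PkCoalgebra 𝒜 k} (h : C₁.α = C₂.α) : C₁ = C₂ := by
  cases C₁; cases C₂; cases h; rfl

namespace PebbleForestCover

variable (F : PebbleForestCover 𝒜.carrier (gaif 𝒜) k)

theorem play_getElem_snd (a : 𝒜.carrier) (i : ℕ) (hi : i < (F.play a).length) :
    F.play (F.play a)[i].2 = (F.play a).take (i + 1) := by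
  simp only [play, List.getElem_map, predChain_getElem, List.map_take]

noncomputable def toCoalgebra : PkCoalgebra 𝒜 k where
  α a := ⟨F.play a, F.play_ne_nil a⟩
  hom R v hv := by
    refine ⟨fun i j => ?_, fun i j u h => ?_, ?_⟩
    · change Cmp (F.play (v i)) (F.play (v j))
      by_cases hij : v i = v j
      · rw [hij]; exact Or.inl (List.prefix_refl _)
      · exact (F.cover _ _ ⟨hij, R, v, hv, ⟨i, rfl⟩, ⟨j, rfl⟩⟩).imp
          F.play_prefix_iff.2 F.play_prefix_iff.2
    · change F.play (v j) = F.play (v i) ++ u at h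
      simp only [plast, getLast_play]
      by_cases hij : v i = v j
      · rw [hij, List.self_eq_append_right] at h
        simp [h]
      · exact F.peb_not_mem_of_play_eq_append ⟨hij, R, v, hv, ⟨i, rfl⟩, ⟨j, rfl⟩⟩ h
    · simpa only [peps, plast, getLast_play] using hv
  counit a := by simp only [peps, plast, getLast_play]
  comult a i := F.play_getElem_snd a i i.2

end PebbleForestCover

namespace PkCoalgebra

variable (C : PkCoalgebra 𝒜 k)

theorem val_α_injective : Function.Injective fun a => (C.α a).1 := fun a b h => by
  rw [← C.counit a, ← C.counit b, Subtype.ext h]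

theorem finite_setOf_prefix (a : 𝒜.carrier) : {b | (C.α b).1 <+: (C.α a).1}.Finite :=
  ((List.finite_toSet _).preimage C.val_α_injective.injOn).subset
    fun _ hb => (List.mem_inits _ _).2 hb

def toForestCover : PebbleForestCover 𝒜.carrier (gaif 𝒜) k where
  le a b := (C.α a).1 <+: (C.α b).1
  refl _ := List.prefix_refl _
  antisymm _ _ hab hba :=
    C.val_α_injective (hab.eq_of_length (hab.length_le.antisymm hba.length_le))
  trans _ _ _ := List.IsPrefix.trans
  pred_finite := C.finite_setOf_prefix
  pred_chain _ _ hx _ hy _ := List.prefix_or_prefix_of_prefix hx hy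
  cover _ _ := by
    rintro ⟨-, R, v, hv, ⟨i, rfl⟩, ⟨j, rfl⟩⟩
    exact (C.hom R v hv).1 i j
  peb a := (plast (C.α a)).1
  peb_cond a b w := by
    rintro ⟨-, R, v, hv, ⟨i, rfl⟩, ⟨j, rfl⟩⟩ ⟨u, hu⟩ haw hne hwb hpeb
    refine (C.hom R v hv).2.1 i j u hu.symm (hpeb ▸ List.mem_map_of_mem ?_)
    exact List.getLast_mem_of_prefix_of_prefix haw
      (lt_of_le_of_ne haw.length_le fun h => hne (C.val_α_injective (haw.eq_of_length h)))
      (hu ▸ hwb) _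

theorem comult_getElem (a : 𝒜.carrier) (i : ℕ) (hi : i < (C.α a).1.length) :
    (C.α (C.α a).1[i].2).1 = (C.α a).1.take (i + 1) :=
  C.comult a ⟨i, hi⟩

theorem plast_α_getElem_snd (a : 𝒜.carrier) (i : ℕ) (hi : i < (C.α a).1.length) :
    plast (C.α (C.α a).1[i].2) = (C.α a).1[i] := by
  simp [plast, C.comult_getElem a i hi, List.getLast_take, List.getElem?_eq_getElem hi]

theorem isPredChain_map_snd (a : 𝒜.carrier) :
    C.toForestCover.IsPredChain a ((C.α a).1.map Prod.snd) := by
  have hsorted : ((C.α a).1.map Prod.snd).Pairwise fun x y => C.toForestCover.le x y ∧ x ≠ y := by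
    refine List.pairwise_iff_getElem.2 fun i j hi hj hij => ?_
    simp only [List.length_map] at hi hj
    simp only [List.getElem_map, toForestCover, C.comult_getElem a i hi, C.comult_getElem a j hj]
    refine ⟨List.take_prefix_take_left (by omega), fun h => ?_⟩
    have := congrArg List.length (congrArg (fun x => (C.α x).1) h)
    simp only [C.comult_getElem a i hi, C.comult_getElem a j hj, List.length_take] at this
    omega
  refine ⟨hsorted.imp And.right, hsorted.imp And.left, fun x => ⟨fun hx => ?_, fun hx => ?_⟩⟩
  · obtain ⟨i, hi, rfl⟩ := List.getElem_of_mem hx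
    simp only [List.length_map] at hi
    simp only [List.getElem_map, toForestCover, C.comult_getElem a i hi]
    exact List.take_prefix _ _
  · rw [← C.counit x]
    exact List.mem_map_of_mem (hx.subset (List.getLast_mem _))

theorem predChain_toForestCover (a : 𝒜.carrier) :
    C.toForestCover.predChain a = (C.α a).1.map Prod.snd :=
  (C.toForestCover.isPredChain_predChain a).eq (C.isPredChain_map_snd a)

theorem play_toForestCover (a : 𝒜.carrier) : C.toForestCover.play a = (C.α a).1 := by
  rw [PebbleForestCover.play, predChain_toForestCover, List.map_map]
  refine (List.map_congr_left fun p hp => ?_).trans (List.map_id _)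
  obtain ⟨i, hi, rfl⟩ := List.getElem_of_mem hp
  simp [toForestCover, C.plast_α_getElem_snd a i hi]

end PkCoalgebra

noncomputable def PkCoalgebra.equivForestCover :
    PkCoalgebra 𝒜 k ≃ PebbleForestCover 𝒜.carrier (gaif 𝒜) k where
  toFun C := C.toForestCover
  invFun F := F.toCoalgebra
  left_inv C := PkCoalgebra.ext (funext fun a => Subtype.ext (C.play_toForestCover a))
  right_inv F := PebbleForestCover.ext (funext₂ fun _ _ => propext F.play_prefix_iff)
    (funext fun a => congrArg Prod.fst (F.getLast_play a _))

end Gaifman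

theorem stmt12_general (σ : RelVocab) (𝒜 : RelStruct σ)
    (k : ℕ) :
    Nonempty (PkCoalgebra 𝒜 k ≃ PebbleForestCover 𝒜.carrier (gaif 𝒜) k) :=
  ⟨PkCoalgebra.equivForestCover⟩

/-- There is a bijective correspondence between `P_k`-coalgebras on a finite structure
`𝒜` and `k`-pebble forest covers of its Gaifman graph. -/
theorem stmt12 (σ : RelVocab) (𝒜 : RelStruct σ) (hfin : Finite 𝒜.carrier)
    (k : ℕ) (hk : 1 ≤ k) :
    Nonempty (PkCoalgebra 𝒜 k ≃ PebbleForestCover 𝒜.carrier (gaif 𝒜) k) :=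
  stmt12_general σ 𝒜 k
end

section
/- Let σ be a relational vocabulary with symbols of arity at most 2, 𝒜 a Kripke structure, a ∈ A, and k ≥ 0. The following are equivalent: (1) there exists an M_k-coalgebra γ : (𝒮_a, a) → M_k(𝒮_a, a); (2) 𝒮_a, the submodel of 𝒜 generated by a, is a synchronization tree of height at most k. -/
/-- `x` is reachable from `a` by a path of transitions. -/
def Reach {V : ModalVocab} (𝒜 : Kripke V) (a x : 𝒜.carrier) : Prop :=
  ∃ l, chainFrom 𝒜 a l ∧ lastFrom 𝒜 a l = x

/-- The submodel `𝒮_a` of `𝒜` generated by `a`. -/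
def GenSub {V : ModalVocab} (𝒜 : Kripke V) (a : 𝒜.carrier) : Kripke V where
  carrier := {x // Reach 𝒜 a x}
  unary P x := 𝒜.unary P x.1
  rel α x y := 𝒜.rel α x.1 y.1

/-- The point `a` of the generated submodel. -/
def gensubpt {V : ModalVocab} (𝒜 : Kripke V) (a : 𝒜.carrier) : (GenSub 𝒜 a).carrier :=
  ⟨a, [], trivial, rfl⟩

/-- An `M_k`-coalgebra on a pointed Kripke structure `(ℬ, b)`. -/
structure MkCoalgebra {V : ModalVocab} (ℬ : Kripke V) (b : ℬ.carrier) (k : ℕ) where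
  γ : ℬ.carrier → MkC ℬ b k
  hom : IsPKHom ℬ b (MkS ℬ b k) (mpt ℬ b k) γ
  counit : ∀ x, meps (γ x) = x
  comult : ∀ (x : ℬ.carrier) (i : Fin (γ x).1.length),
    (γ ((γ x).1.get i).2).1 = (γ x).1.take (i + 1)

/-
An `M_k`-coalgebra `γ` is forced on every path: if `L` is a path from the base point ending in
`x`, then `γ x = L`. Indeed, `γ` maps the last step `x' →^α x` of `L` to an extension
`γ x' ++ [(α, a')]`, and the counit law forces `a' = x`. Hence paths from the base point are
determined by their endpoints, and have length at most `k`. Conversely, when every point is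
reachable and paths are unique and of length at most `k`, sending each point to its unique path
is a coalgebra: each coalgebra law holds because both sides are paths with the same endpoint.
For the generated submodel, paths in `𝒮_a` and in `𝒜` correspond by forgetting reachability
proofs, so both conditions transfer.
-/

section Paths

variable {V : ModalVocab} (ℬ : Kripke V)

/-- When every point is reachable from `b`, this says that `(ℬ, b)` is a synchronization tree
of height at most `k`. -/
def IsSyncTreeOfHeight (b : ℬ.carrier) (k : ℕ) : Prop :=
  (∀ l l' : List (V.Act × ℬ.carrier), chainFrom ℬ b l → chainFrom ℬ b l' →
      lastFrom ℬ b l = lastFrom ℬ b l' → l = l') ∧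
    ∀ l : List (V.Act × ℬ.carrier), chainFrom ℬ b l → l.length ≤ k

variable {ℬ}

theorem chainFrom_append (l l' : List (V.Act × ℬ.carrier)) (x : ℬ.carrier) :
    chainFrom ℬ x (l ++ l') ↔ chainFrom ℬ x l ∧ chainFrom ℬ (lastFrom ℬ x l) l' := by
  induction l generalizing x with
  | nil => simp [chainFrom, lastFrom]
  | cons p l ih => simp [chainFrom, lastFrom, ih, and_assoc]

theorem lastFrom_append (l l' : List (V.Act × ℬ.carrier)) (x : ℬ.carrier) :
    lastFrom ℬ x (l ++ l') = lastFrom ℬ (lastFrom ℬ x l) l' := by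
  induction l generalizing x with
  | nil => rfl
  | cons p l ih => exact ih p.2

theorem chainFrom_append_singleton {l : List (V.Act × ℬ.carrier)} {x y : ℬ.carrier} {α : V.Act}
    (hl : chainFrom ℬ x l) (hy : ℬ.rel α (lastFrom ℬ x l) y) :
    chainFrom ℬ x (l ++ [(α, y)]) :=
  (chainFrom_append l _ x).2 ⟨hl, hy, trivial⟩

theorem lastFrom_append_singleton (l : List (V.Act × ℬ.carrier)) (x y : ℬ.carrier) (α : V.Act) :
    lastFrom ℬ x (l ++ [(α, y)]) = y := by
  rw [lastFrom_append]; rfl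

theorem lastFrom_take_succ (l : List (V.Act × ℬ.carrier)) (x : ℬ.carrier) (i : Fin l.length) :
    lastFrom ℬ x (l.take (i + 1)) = (l.get i).2 := by
  induction l generalizing x with
  | nil => exact i.elim0
  | cons p l ih =>
    obtain ⟨i, hi⟩ := i
    cases i with
    | zero => rfl
    | succ i => exact ih p.2 ⟨i, Nat.lt_of_succ_lt_succ hi⟩

theorem Reach.of_rel {b x y : ℬ.carrier} {α : V.Act} (hx : Reach ℬ b x) (hxy : ℬ.rel α x y) :
    Reach ℬ b y := by
  obtain ⟨l, hl, rfl⟩ := hx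
  exact ⟨l ++ [(α, y)], chainFrom_append_singleton hl hxy, lastFrom_append_singleton _ _ _ _⟩

end Paths

namespace MkCoalgebra

variable {V : ModalVocab} {ℬ : Kripke V} {b : ℬ.carrier} {k : ℕ}

theorem val_γ_lastFrom (C : MkCoalgebra ℬ b k) (L : List (V.Act × ℬ.carrier))
    (hL : chainFrom ℬ b L) : (C.γ (lastFrom ℬ b L)).1 = L := by
  induction L using List.reverseRecOn with
  | nil => rw [show lastFrom ℬ b [] = b from rfl, C.hom.2]; rfl
  | append_singleton L p ih =>
    obtain ⟨α, x⟩ := p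
    obtain ⟨hL, hx, -⟩ := (chainFrom_append L _ b).1 hL
    obtain ⟨a', ha'⟩ := C.hom.1.2 α _ _ hx
    rw [ih hL] at ha'
    have hx' : a' = x := by
      simpa only [meps, ha', lastFrom_append_singleton] using C.counit x
    rw [lastFrom_append_singleton, ha', hx']

theorem isSyncTreeOfHeight (C : MkCoalgebra ℬ b k) : IsSyncTreeOfHeight ℬ b k := by
  refine ⟨fun l l' hl hl' hlast => ?_, fun l hl => ?_⟩
  · rw [← C.val_γ_lastFrom l hl, ← C.val_γ_lastFrom l' hl', hlast]
  · simpa only [C.val_γ_lastFrom l hl] using (C.γ (lastFrom ℬ b l)).2.1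

noncomputable def ofIsSyncTreeOfHeight (hreach : ∀ x, Reach ℬ b x)
    (htree : IsSyncTreeOfHeight ℬ b k) : MkCoalgebra ℬ b k :=
  have hpath (x : ℬ.carrier) := (hreach x).choose_spec
  let γ (x : ℬ.carrier) : MkC ℬ b k :=
    ⟨(hreach x).choose, htree.2 _ (hpath x).1, (hpath x).1⟩
  have γ_eq {x : ℬ.carrier} {L : List (V.Act × ℬ.carrier)} (hL : chainFrom ℬ b L)
      (hx : lastFrom ℬ b L = x) : (γ x).1 = L :=
    htree.1 _ _ (hpath x).1 hL ((hpath x).2.trans hx.symm)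
  have counit (x : ℬ.carrier) : meps (γ x) = x := (hpath x).2
  { γ
    hom := by
      refine ⟨⟨fun P x hP => ?_, fun α x y hxy => ⟨y, ?_⟩⟩, Subtype.ext (γ_eq trivial rfl)⟩
      · show ℬ.unary P (meps (γ x))
        rwa [counit]
      · rw [← counit x] at hxy
        exact γ_eq (chainFrom_append_singleton (γ x).2.2 hxy) (lastFrom_append_singleton _ _ _ _)
    counit
    comult := fun x i =>
      γ_eq (chainFrom_take ℬ _ b _ (γ x).2.2) (lastFrom_take_succ (γ x).1 b i) }

theorem nonempty_iff_isSyncTreeOfHeight (hreach : ∀ x, Reach ℬ b x) :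
    Nonempty (MkCoalgebra ℬ b k) ↔ IsSyncTreeOfHeight ℬ b k :=
  ⟨fun ⟨C⟩ => C.isSyncTreeOfHeight, fun h => ⟨ofIsSyncTreeOfHeight hreach h⟩⟩

end MkCoalgebra

namespace GenSub

variable {V : ModalVocab} {𝒜 : Kripke V} {a : 𝒜.carrier}

def valPath (L : List (V.Act × (GenSub 𝒜 a).carrier)) : List (V.Act × 𝒜.carrier) :=
  L.map (Prod.map id Subtype.val)

theorem valPath_injective : Function.Injective (valPath (𝒜 := 𝒜) (a := a)) :=
  List.map_injective_iff.2 (Function.injective_id.prodMap Subtype.val_injective)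

theorem length_valPath (L : List (V.Act × (GenSub 𝒜 a).carrier)) :
    (valPath L).length = L.length :=
  List.length_map _

theorem chainFrom_valPath_iff (L : List (V.Act × (GenSub 𝒜 a).carrier))
    (x : (GenSub 𝒜 a).carrier) : chainFrom 𝒜 x.1 (valPath L) ↔ chainFrom (GenSub 𝒜 a) x L := by
  induction L generalizing x with
  | nil => exact Iff.rfl
  | cons p L ih => exact and_congr Iff.rfl (ih p.2)

theorem lastFrom_valPath (L : List (V.Act × (GenSub 𝒜 a).carrier)) (x : (GenSub 𝒜 a).carrier) :
    lastFrom 𝒜 x.1 (valPath L) = (lastFrom (GenSub 𝒜 a) x L).1 := by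
  induction L generalizing x with
  | nil => rfl
  | cons p L ih => exact ih p.2

theorem exists_valPath_eq {l : List (V.Act × 𝒜.carrier)} {x : (GenSub 𝒜 a).carrier}
    (hl : chainFrom 𝒜 x.1 l) :
    ∃ L : List (V.Act × (GenSub 𝒜 a).carrier), valPath L = l := by
  induction l generalizing x with
  | nil => exact ⟨[], rfl⟩
  | cons p l ih =>
    obtain ⟨α, y⟩ := p
    obtain ⟨L, hL⟩ := ih (x := ⟨y, x.2.of_rel hl.1⟩) hl.2
    exact ⟨(α, ⟨y, x.2.of_rel hl.1⟩) :: L, congrArg (List.cons (α, y)) hL⟩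

theorem reach_gensubpt (x : (GenSub 𝒜 a).carrier) : Reach (GenSub 𝒜 a) (gensubpt 𝒜 a) x := by
  obtain ⟨l, hl, hlast⟩ := x.2
  obtain ⟨L, rfl⟩ := exists_valPath_eq (x := gensubpt 𝒜 a) hl
  exact ⟨L, (chainFrom_valPath_iff L _).1 hl, Subtype.ext ((lastFrom_valPath L _).symm.trans hlast)⟩

theorem isSyncTreeOfHeight_iff {k : ℕ} :
    IsSyncTreeOfHeight (GenSub 𝒜 a) (gensubpt 𝒜 a) k ↔ IsSyncTreeOfHeight 𝒜 a k := by
  have chain_iff (L : List (V.Act × (GenSub 𝒜 a).carrier)) :=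
    chainFrom_valPath_iff L (gensubpt 𝒜 a)
  have last_eq (L : List (V.Act × (GenSub 𝒜 a).carrier)) := lastFrom_valPath L (gensubpt 𝒜 a)
  have lift {l : List (V.Act × 𝒜.carrier)} (hl : chainFrom 𝒜 a l) :
      ∃ L, valPath L = l := exists_valPath_eq (x := gensubpt 𝒜 a) hl
  constructor
  · rintro ⟨huniq, hlen⟩
    refine ⟨fun l l' hl hl' hlast => ?_, fun l hl => ?_⟩
    · obtain ⟨L, rfl⟩ := lift hl
      obtain ⟨L', rfl⟩ := lift hl'
      refine congrArg valPath (huniq L L' ((chain_iff L).1 hl) ((chain_iff L').1 hl') ?_)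
      exact Subtype.ext ((last_eq L).symm.trans (hlast.trans (last_eq L')))
    · obtain ⟨L, rfl⟩ := lift hl
      exact (length_valPath L).trans_le (hlen L ((chain_iff L).1 hl))
  · rintro ⟨huniq, hlen⟩
    refine ⟨fun L L' hL hL' hlast => valPath_injective ?_, fun L hL => ?_⟩
    · exact huniq _ _ ((chain_iff L).2 hL) ((chain_iff L').2 hL')
        ((last_eq L).trans ((congrArg Subtype.val hlast).trans (last_eq L').symm))
    · exact (length_valPath L).symm.trans_le (hlen _ ((chain_iff L).2 hL))

end GenSub

/-- There is an `M_k`-coalgebra on `(𝒮_a, a)` iff the submodel generated by `a` is a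
synchronization tree of height at most `k`: every element reachable from `a` has a
unique path from `a`, and all paths from `a` have length at most `k`. -/
theorem stmt14 (V : ModalVocab) (𝒜 : Kripke V) (a : 𝒜.carrier) (k : ℕ) :
    Nonempty (MkCoalgebra (GenSub 𝒜 a) (gensubpt 𝒜 a) k) ↔
    ((∀ l l' : List (V.Act × 𝒜.carrier), chainFrom 𝒜 a l → chainFrom 𝒜 a l' →
        lastFrom 𝒜 a l = lastFrom 𝒜 a l' → l = l') ∧
      (∀ l : List (V.Act × 𝒜.carrier), chainFrom 𝒜 a l → l.length ≤ k)) :=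
  (MkCoalgebra.nonempty_iff_isSyncTreeOfHeight GenSub.reach_gensubpt).trans
    GenSub.isSyncTreeOfHeight_iff
end

section
/- Let G be a comonad on a category 𝒞. For all objects A and B of 𝒞, the following are equivalent: (1) there exists a morphism G A → B; (2) for every G-coalgebra α : C → G C, if there exists a morphism C → A then there exists a morphism C → B. -/
open CategoryTheory

/-- For a comonad `G` on a category `C`, there exists a morphism `G A ⟶ B` iff every
object `C` carrying a `G`-coalgebra with a morphism to `A` also has a morphism to `B`. -/
theorem stmt15 {C : Type*} [Category C] (G : Comonad C) (A B : C) :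
    Nonempty ((G : C ⥤ C).obj A ⟶ B) ↔
    (∀ D : Comonad.Coalgebra G, Nonempty (D.A ⟶ A) → Nonempty (D.A ⟶ B)) := by
  constructor
  · rintro ⟨f⟩ D ⟨g⟩
    exact ⟨D.a ≫ (G : C ⥤ C).map g ≫ f⟩
  · intro h
    exact h ⟨(G : C ⥤ C).obj A, G.δ.app A, by simp, by simp⟩ ⟨G.ε.app A⟩
end
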